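/- arXiv:math-ph/0607008 — 7 statements merged into one kernel-verified Lean document; each statement's English description precedes it below -/
import Mathlib

section
/- Let M ≥ 1 and let S : [0,1] → [0,1] be adapted to the M-equal partition, with Markov matrix B. Then for every k ≥ 1 and every sequence of indices j_0, j_1, …, j_k ∈ {1,…,M}, the product of matrix entries along the sequence equals the normalized measure of the corresponding cylinder set: B_{j_0 j_1} · B_{j_1 j_2} · ⋯ · B_{j_{k-1} j_k} = M · μ(⋂_{r=0}^{k} S^{-r}(E_{j_r})). -/
open MeasureTheory Set Filter Matrix

noncomputable section

/-- The atom `E_{j+1} = (j/M, (j+1)/M)` of the `M`-equal partition of `[0,1]`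
(indexed by `j : Fin M`, zero-based). -/
def atomE (M : ℕ) (j : Fin M) : Set ℝ :=
  Set.Ioo ((j : ℝ) / M) (((j : ℝ) + 1) / M)

/-- The endpoint set `𝓔(M) = {i/M : 0 ≤ i ≤ M}`. -/
def endpts (M : ℕ) : Set ℝ :=
  {x : ℝ | ∃ i : ℕ, i ≤ M ∧ x = (i : ℝ) / M}

/-- The Markov matrix of `S` for the `M`-equal partition:
`B_{jk} = M · μ(E_j ∩ S⁻¹(E_k))`, where `μ` is Lebesgue measure. -/
def markovB (S : ℝ → ℝ) (M : ℕ) (j k : Fin M) : ℝ :=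
  M * (volume (atomE M j ∩ S ⁻¹' atomE M k)).toReal

/-- `S` is adapted to the `M`-equal partition: on each atom `E_j` it is affine,
`S x = a_j x + c_j` with `a_j ≠ 0`, and the values of the affine map at the two
endpoints of `E_j` belong to `𝓔(M)`. -/
def AdaptedTo (S : ℝ → ℝ) (M : ℕ) : Prop :=
  ∀ j : Fin M, ∃ a c : ℝ, a ≠ 0 ∧ (∀ x ∈ atomE M j, S x = a * x + c) ∧
    a * ((j : ℝ) / M) + c ∈ endpts M ∧ a * (((j : ℝ) + 1) / M) + c ∈ endpts M

/-- `S` preserves Lebesgue measure `μ` on `[0,1]`: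
`μ(S⁻¹(A)) = μ(A)` for every Borel `A ⊆ [0,1]` (the preimage taken inside `[0,1]`). -/
def PreservesLeb (S : ℝ → ℝ) : Prop :=
  ∀ A : Set ℝ, A ⊆ Set.Icc 0 1 → MeasurableSet A →
    volume (Set.Icc (0:ℝ) 1 ∩ S ⁻¹' A) = volume A

/-- `S` is ergodic w.r.t. Lebesgue measure on `[0,1]`: every Borel `A ⊆ [0,1]`
with `S⁻¹(A) = A` has measure `0` or `1`. -/
def ErgodicLeb (S : ℝ → ℝ) : Prop :=
  ∀ A : Set ℝ, A ⊆ Set.Icc 0 1 → MeasurableSet A →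
    Set.Icc (0:ℝ) 1 ∩ S ⁻¹' A = A → volume A = 0 ∨ volume A = 1

/-- `(M_n)` is an admissible sequence of partitions for `S`: positive integers with
`M_n ∣ M_{n+1}`, `S` adapted to each `M_n`-equal partition, and
`S^{-j}(𝓔(M_0)) ∩ [0,1] ⊆ 𝓔(M_n)` for all `1 ≤ j ≤ n`. -/
def AdmissibleSeq (S : ℝ → ℝ) (Mseq : ℕ → ℕ) : Prop :=
  (∀ n, 0 < Mseq n) ∧ (∀ n, Mseq n ∣ Mseq (n + 1)) ∧
  (∀ n, AdaptedTo S (Mseq n)) ∧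
  (∀ n j, 1 ≤ j → j ≤ n → (S^[j]) ⁻¹' endpts (Mseq 0) ∩ Set.Icc 0 1 ⊆ endpts (Mseq n))

/-- The diagonal entry of the quantized observable: `O_{jj}(φ) = M · ∫_{E_j} φ dμ`. -/
def Oquant (φ : ℝ → ℝ) (M : ℕ) (j : Fin M) : ℝ :=
  M * ∫ x in atomE M j, φ x

/-- The local average `φ̂`: equal to `O_{jj}(φ)` on each atom `E_j`, and `0`
on the endpoint set. -/
def hatPhi (φ : ℝ → ℝ) (M : ℕ) (x : ℝ) : ℝ :=
  ∑ j : Fin M, (atomE M j).indicator (fun _ => Oquant φ M j) x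

/-- The time average `O_T = (1/T) ∑_{t=0}^{T-1} (U*)^t O U^t`. -/
def timeAvg (M T : ℕ) (U O : Matrix (Fin M) (Fin M) ℂ) : Matrix (Fin M) (Fin M) ℂ :=
  ((T : ℂ))⁻¹ • ∑ t ∈ Finset.range T, (Uᴴ) ^ t * O * U ^ t

/-! ### Auxiliary lemmas for `stmt_2` -/

lemma volume_affine_preimage (a c : ℝ) (ha : a ≠ 0) (T : Set ℝ) :
    volume ((fun x => a * x + c) ⁻¹' T) = ENNReal.ofReal |a⁻¹| * volume T := by
  have h : (fun x : ℝ => a * x + c) ⁻¹' T = (a * ·) ⁻¹' ((· + c) ⁻¹' T) := rfl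
  rw [h, Real.volume_preimage_mul_left ha, measure_preimage_add_right]

lemma volume_atomE (M : ℕ) (hM : 1 ≤ M) (j : Fin M) :
    volume (atomE M j) = ENNReal.ofReal (1 / M) := by
  have hM0 : (0 : ℝ) < M := by exact_mod_cast hM
  rw [atomE, Real.volume_Ioo]
  congr 1
  field_simp
  ring

/-- Key step: the Markov entry pulls out of a cylinder measure. -/
lemma key_step (M : ℕ) (hM : 1 ≤ M) (S : ℝ → ℝ)
    (hadapt : AdaptedTo S M) (j0 j1 : Fin M) (A : Set ℝ) :
    (M : ℝ) * (volume (atomE M j0 ∩ S ⁻¹' (atomE M j1 ∩ A))).toReal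
      = markovB S M j0 j1 * ((M : ℝ) * (volume (atomE M j1 ∩ A)).toReal) := by
  have hM0 : (0 : ℝ) < M := by exact_mod_cast hM
  obtain ⟨a, c, ha, hS, he0, he1⟩ := hadapt j0
  have hatom0 : atomE M j0 = Set.Ioo ((j0 : ℝ) / M) (((j0 : ℝ) + 1) / M) := rfl
  have hpp' : (j0 : ℝ) / M < ((j0 : ℝ) + 1) / M :=
    (div_lt_div_iff_of_pos_right hM0).mpr (by linarith)
  obtain ⟨m, n, hmn, hmE, hnE, hmem⟩ :
      ∃ m n : ℝ, m < n ∧ m ∈ endpts M ∧ n ∈ endpts M ∧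
        ∀ x : ℝ, x ∈ atomE M j0 ↔ a * x + c ∈ Set.Ioo m n := by
    rcases ha.lt_or_gt with hneg | hpos
    · refine ⟨a * (((j0 : ℝ) + 1) / M) + c, a * ((j0 : ℝ) / M) + c, by nlinarith,
        he1, he0, fun x => ?_⟩
      rw [hatom0]
      simp only [Set.mem_Ioo]
      constructor
      · rintro ⟨h1, h2⟩; constructor <;> nlinarith
      · rintro ⟨h1, h2⟩; constructor <;> nlinarith
    · refine ⟨a * ((j0 : ℝ) / M) + c, a * (((j0 : ℝ) + 1) / M) + c, by nlinarith,
        he0, he1, fun x => ?_⟩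
      rw [hatom0]
      simp only [Set.mem_Ioo]
      constructor
      · rintro ⟨h1, h2⟩; constructor <;> nlinarith
      · rintro ⟨h1, h2⟩; constructor <;> nlinarith
  have hpre : ∀ T : Set ℝ,
      atomE M j0 ∩ S ⁻¹' T = (fun x => a * x + c) ⁻¹' (Set.Ioo m n ∩ T) := by
    intro T
    ext x
    simp only [Set.mem_inter_iff, Set.mem_preimage]
    constructor
    · rintro ⟨hx, hxT⟩
      exact ⟨(hmem x).1 hx, by rwa [← hS x hx]⟩
    · rintro ⟨hfx, hxT⟩
      have hx := (hmem x).2 hfx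
      exact ⟨hx, by rwa [hS x hx]⟩
  have hvol : ∀ T : Set ℝ, volume (atomE M j0 ∩ S ⁻¹' T)
      = ENNReal.ofReal |a⁻¹| * volume (Set.Ioo m n ∩ T) := by
    intro T
    rw [hpre T, volume_affine_preimage a c ha]
  by_cases hcase : Set.Ioo m n ∩ atomE M j1 = ∅
  · have h1 : volume (atomE M j0 ∩ S ⁻¹' (atomE M j1 ∩ A)) = 0 := by
      rw [hvol]
      have he : Set.Ioo m n ∩ (atomE M j1 ∩ A) = ∅ := by
        apply Set.eq_empty_of_subset_empty
        rw [← hcase]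
        exact fun x hx => ⟨hx.1, hx.2.1⟩
      rw [he]
      simp
    have h2 : markovB S M j0 j1 = 0 := by
      simp only [markovB]
      rw [hvol, hcase]
      simp
    rw [h1, h2]
    simp
  · obtain ⟨x, hx1, hx2⟩ := Set.nonempty_iff_ne_empty.2 hcase
    have hx2' : (j1 : ℝ) / M < x ∧ x < ((j1 : ℝ) + 1) / M := hx2
    obtain ⟨mi, hmi, hmeq⟩ := hmE
    obtain ⟨ni, hni, hneq⟩ := hnE
    have hsub : atomE M j1 ⊆ Set.Ioo m n := by
      have hmq : m ≤ (j1 : ℝ) / M := by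
        have h1 : (mi : ℝ) / M < ((j1 : ℝ) + 1) / M := by
          rw [← hmeq]; exact hx1.1.trans hx2'.2
        have h2 : (mi : ℝ) < ((j1 : ℕ) : ℝ) + 1 := by
          have := (div_lt_div_iff_of_pos_right hM0).mp h1
          push_cast at this ⊢
          linarith
        have h3 : mi ≤ (j1 : ℕ) := Nat.lt_succ_iff.mp (by exact_mod_cast h2)
        have h4 : (mi : ℝ) ≤ ((j1 : ℕ) : ℝ) := by exact_mod_cast h3
        rw [hmeq]
        exact (div_le_div_iff_of_pos_right hM0).mpr (by push_cast; push_cast at h4; linarith)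
      have hqn : ((j1 : ℝ) + 1) / M ≤ n := by
        have h1 : (j1 : ℝ) / M < (ni : ℝ) / M := by
          rw [← hneq]; exact hx2'.1.trans hx1.2
        have h2 : ((j1 : ℕ) : ℝ) < (ni : ℝ) := by
          have := (div_lt_div_iff_of_pos_right hM0).mp h1
          push_cast at this ⊢
          linarith
        have h3 : (j1 : ℕ) + 1 ≤ ni := by
          have : (j1 : ℕ) < ni := by exact_mod_cast h2
          omega
        have h4 : ((j1 : ℕ) : ℝ) + 1 ≤ (ni : ℝ) := by exact_mod_cast h3
        rw [hneq]
        exact (div_le_div_iff_of_pos_right hM0).mpr (by push_cast; push_cast at h4; linarith)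
      intro y hy
      exact Set.Ioo_subset_Ioo hmq hqn hy
    have hBB : markovB S M j0 j1 = |a⁻¹| := by
      simp only [markovB]
      rw [hvol, Set.inter_eq_self_of_subset_right hsub, volume_atomE M hM,
        ← ENNReal.ofReal_mul (abs_nonneg _), ENNReal.toReal_ofReal (by positivity)]
      field_simp
    have hCi : Set.Ioo m n ∩ (atomE M j1 ∩ A) = atomE M j1 ∩ A :=
      Set.inter_eq_self_of_subset_right fun y hy => hsub hy.1
    rw [hBB, hvol, hCi, ENNReal.toReal_mul, ENNReal.toReal_ofReal (abs_nonneg _)]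
    ring

lemma cyl_aux (M : ℕ) (hM : 1 ≤ M) (S : ℝ → ℝ) (hadapt : AdaptedTo S M) :
    ∀ (k : ℕ) (j : Fin (k + 1) → Fin M),
      ∏ r : Fin k, markovB S M (j r.castSucc) (j r.succ)
        = M * (volume (⋂ r : Fin (k + 1), S^[(r : ℕ)] ⁻¹' atomE M (j r))).toReal := by
  intro k
  induction k with
  | zero =>
    intro j
    have h1 : (⋂ r : Fin 1, S^[(r : ℕ)] ⁻¹' atomE M (j r)) = atomE M (j 0) := by
      ext x
      simp [Fin.forall_fin_one]
    have hM0 : (0 : ℝ) < M := by exact_mod_cast hM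
    rw [h1, volume_atomE M hM, ENNReal.toReal_ofReal (by positivity),
      Fin.prod_univ_zero]
    field_simp
  | succ k ih =>
    intro j
    set C : Set ℝ := ⋂ r : Fin (k + 1), S^[(r : ℕ)] ⁻¹' atomE M (j r.succ) with hC
    have hcyl : (⋂ r : Fin (k + 2), S^[(r : ℕ)] ⁻¹' atomE M (j r))
        = atomE M (j 0) ∩ S ⁻¹' C := by
      ext x
      simp [hC, Fin.forall_fin_succ, Function.iterate_succ_apply]
    have hsub : C ⊆ atomE M (j 1) := by
      intro x hx
      have := Set.mem_iInter.1 hx 0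
      simpa using this
    have htail : (∏ r : Fin k, markovB S M (j r.succ.castSucc) (j r.succ.succ))
        = ∏ r : Fin k, markovB S M ((j ∘ Fin.succ) r.castSucc) ((j ∘ Fin.succ) r.succ) := by
      apply Finset.prod_congr rfl
      intro r _
      simp [Function.comp]
    have hCe : (⋂ r : Fin (k + 1), S^[(r : ℕ)] ⁻¹' atomE M ((j ∘ Fin.succ) r)) = C := by
      rw [hC]; rfl
    have hCi : atomE M (j 1) ∩ C = C := Set.inter_eq_self_of_subset_right hsub
    rw [Fin.prod_univ_succ, htail, ih (j ∘ Fin.succ), hCe, hcyl,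
      Fin.castSucc_zero, Fin.succ_zero_eq_one]
    calc markovB S M (j 0) (j 1) * (↑M * (volume C).toReal)
        = markovB S M (j 0) (j 1) * (↑M * (volume (atomE M (j 1) ∩ C)).toReal) := by
          rw [hCi]
      _ = ↑M * (volume (atomE M (j 0) ∩ S ⁻¹' (atomE M (j 1) ∩ C))).toReal :=
          (key_step M hM S hadapt (j 0) (j 1) C).symm
      _ = ↑M * (volume (atomE M (j 0) ∩ S ⁻¹' C)).toReal := by rw [hCi]

/-- for `S` adapted to the `M`-equal partition, products of Markov
matrix entries along a sequence of indices give the normalized cylinder measures: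
`B_{j₀j₁}⋯B_{j_{k-1}j_k} = M · μ(⋂_{r=0}^k S^{-r}(E_{j_r}))`. -/
theorem stmt_2 (M : ℕ) (hM : 1 ≤ M) (S : ℝ → ℝ) (hSmeas : Measurable S)
    (hSmaps : Set.MapsTo S (Set.Icc 0 1) (Set.Icc 0 1))
    (hadapt : AdaptedTo S M) (k : ℕ) (hk : 1 ≤ k) (j : Fin (k + 1) → Fin M) :
    ∏ r : Fin k, markovB S M (j r.castSucc) (j r.succ)
      = M * (volume (⋂ r : Fin (k + 1), S^[(r : ℕ)] ⁻¹' atomE M (j r))).toReal := by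
  exact cyl_aux M hM S hadapt k j
end
end

section
/- Let S : [0,1] → [0,1] and let (M_n) be an admissible sequence of partitions for S. Fix n ≥ 1 and write E_1, …, E_{M_n} for the atoms of the M_n-equal partition. Then for every atom E of the M_n-equal partition and every integer 1 ≤ j ≤ n+1, the restriction of the iterate S^j to E is injective. -/
open MeasureTheory Set Filter Matrix

noncomputable section

lemma atomE_not_endpts {M : ℕ} (k : Fin M) {x : ℝ} (hx : x ∈ atomE M k) :
    x ∉ endpts M := by
  rintro ⟨i, hi, rfl⟩
  obtain ⟨h1, h2⟩ := hx
  have hM : (0:ℝ) < M := by exact_mod_cast k.pos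
  have h1' : (k:ℝ) < i := by
    have := (div_lt_div_iff_of_pos_right hM).mp h1
    exact this
  have h2' : (i:ℝ) < (k:ℝ) + 1 := (div_lt_div_iff_of_pos_right hM).mp h2
  have hk1 : (k:ℕ) < i := by exact_mod_cast h1'
  have hk2 : i < (k:ℕ) + 1 := by exact_mod_cast h2'
  omega

lemma image_affine_between {a c l r y z w : ℝ} (ha : a ≠ 0)
    (hy : y ∈ (fun x => a * x + c) '' Set.Ioo l r)
    (hz : z ∈ (fun x => a * x + c) '' Set.Ioo l r)
    (h1 : y ≤ w) (h2 : w ≤ z) : w ∈ (fun x => a * x + c) '' Set.Ioo l r := by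
  obtain ⟨x1, hx1, rfl⟩ := hy
  obtain ⟨x2, hx2, rfl⟩ := hz
  simp only at h1 h2
  refine ⟨(w - c) / a, ?_, by field_simp; ring⟩
  rcases ha.lt_or_gt with hneg | hpos
  · have k1 : x2 ≤ (w - c) / a := by
      rw [le_div_iff_of_neg hneg]; linarith
    have k2 : (w - c) / a ≤ x1 := by
      rw [div_le_iff_of_neg hneg]; linarith
    exact ⟨lt_of_lt_of_le hx2.1 k1, lt_of_le_of_lt k2 hx1.2⟩
  · have k1 : x1 ≤ (w - c) / a := by
      rw [le_div_iff₀ hpos]; linarith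
    have k2 : (w - c) / a ≤ x2 := by
      rw [div_le_iff₀ hpos]; linarith
    exact ⟨lt_of_lt_of_le hx1.1 k1, lt_of_le_of_lt k2 hx2.2⟩

lemma iter_affine_on_atom (S : ℝ → ℝ) (hSmaps : Set.MapsTo S (Set.Icc 0 1) (Set.Icc 0 1))
    (Mseq : ℕ → ℕ) (hadm : AdmissibleSeq S Mseq) (n : ℕ) (hn : 1 ≤ n)
    (k : Fin (Mseq n)) :
    ∀ j : ℕ, 1 ≤ j → j ≤ n + 1 →
      ∃ a c : ℝ, a ≠ 0 ∧ ∀ x ∈ atomE (Mseq n) k, S^[j] x = a * x + c := by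
  obtain ⟨hpos, _, hadapt, hend⟩ := hadm
  have hM : (0:ℝ) < Mseq n := by exact_mod_cast hpos n
  have hM0 : (0:ℝ) < Mseq 0 := by exact_mod_cast hpos 0
  have hE_sub : atomE (Mseq n) k ⊆ Set.Icc 0 1 := by
    rintro x ⟨h1, h2⟩
    have hk : ((k:ℕ):ℝ) + 1 ≤ (Mseq n : ℝ) := by exact_mod_cast k.isLt
    constructor
    · have : (0:ℝ) ≤ (k:ℝ) / Mseq n := by positivity
      linarith
    · have : ((k:ℝ) + 1) / Mseq n ≤ 1 := by
        rw [div_le_one hM]; exact hk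
      linarith
  intro j
  induction j with
  | zero => intro h; omega
  | succ j ih =>
    intro _ hj1
    rcases Nat.eq_zero_or_pos j with rfl | hjpos
    · obtain ⟨a, c, ha, hfa, _, _⟩ := hadapt n k
      exact ⟨a, c, ha, fun x hx => by simpa using hfa x hx⟩
    · obtain ⟨a, c, ha, hfa⟩ := ih hjpos (by omega)
      have hIcc : ∀ x ∈ atomE (Mseq n) k, S^[j] x ∈ Set.Icc (0:ℝ) 1 :=
        fun x hx => hSmaps.iterate j (hE_sub hx)
      have havoid : ∀ x ∈ atomE (Mseq n) k, S^[j] x ∉ endpts (Mseq 0) := by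
        intro x hx h
        exact atomE_not_endpts k hx (hend n j hjpos (by omega) ⟨h, hE_sub hx⟩)
      -- pick a point of the atom
      have hlr : (k:ℝ) / Mseq n < ((k:ℝ) + 1) / Mseq n :=
        (div_lt_div_iff_of_pos_right hM).mpr (by linarith)
      obtain ⟨x0, hx0⟩ := Set.nonempty_Ioo.mpr hlr
      have hx0' : x0 ∈ atomE (Mseq n) k := hx0
      set y0 := S^[j] x0 with hy0def
      have hy0Icc := hIcc x0 hx0'
      have hy0end := havoid x0 hx0'
      have hy0pos : 0 < y0 := by
        rcases lt_or_eq_of_le hy0Icc.1 with h | h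
        · exact h
        · exact absurd (⟨0, Nat.zero_le _, by rw [← h]; simp⟩ :
            S^[j] x0 ∈ endpts (Mseq 0)) hy0end
      have hy0lt1 : y0 < 1 := by
        rcases lt_or_eq_of_le hy0Icc.2 with h | h
        · exact h
        · exact absurd (⟨Mseq 0, le_refl _, by
            rw [h, div_self (ne_of_gt hM0)]⟩ :
            S^[j] x0 ∈ endpts (Mseq 0)) hy0end
      set m : ℕ := ⌊y0 * Mseq 0⌋₊ with hmdef
      have hmle : (m:ℝ) ≤ y0 * Mseq 0 := Nat.floor_le (by positivity)
      have hmlt : m < Mseq 0 := by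
        have : (m:ℝ) < Mseq 0 := lt_of_le_of_lt hmle (by nlinarith)
        exact_mod_cast this
      have hlow : (m:ℝ) / Mseq 0 < y0 := by
        have hle : (m:ℝ) / Mseq 0 ≤ y0 := (div_le_iff₀ hM0).mpr hmle
        rcases lt_or_eq_of_le hle with h | h
        · exact h
        · exact absurd (⟨m, hmlt.le, h.symm⟩ : y0 ∈ endpts (Mseq 0)) hy0end
      have hhigh : y0 < ((m:ℝ) + 1) / Mseq 0 := by
        rw [lt_div_iff₀ hM0]
        have := Nat.lt_floor_add_one (y0 * Mseq 0)
        push_cast at this ⊢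
        linarith
      -- the image set
      set I := (fun x => a * x + c) '' Set.Ioo ((k:ℝ) / Mseq n) (((k:ℝ) + 1) / Mseq n)
        with hIdef
      have hmemI : ∀ x ∈ atomE (Mseq n) k, S^[j] x ∈ I :=
        fun x hx => ⟨x, hx, (hfa x hx).symm⟩
      have hInot : ∀ w ∈ I, w ∉ endpts (Mseq 0) := by
        rintro w ⟨x, hx, rfl⟩
        have := havoid x hx
        rwa [hfa x hx] at this
      have hy0I : y0 ∈ I := hmemI x0 hx0'
      -- every point of the image lies in the atom (m/M0, (m+1)/M0)
      have hclaim : ∀ x ∈ atomE (Mseq n) k,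
          S^[j] x ∈ Set.Ioo ((m:ℝ) / Mseq 0) (((m:ℝ) + 1) / Mseq 0) := by
        intro x hx
        set z := S^[j] x with hzdef
        have hzI : z ∈ I := hmemI x hx
        have hzend : z ∉ endpts (Mseq 0) := havoid x hx
        by_contra hcon
        rw [Set.mem_Ioo, not_and_or, not_lt, not_lt] at hcon
        rcases hcon with h | h
        · have hne : z ≠ (m:ℝ) / Mseq 0 := fun he => hzend ⟨m, hmlt.le, he⟩
          have hlt : z < (m:ℝ) / Mseq 0 := lt_of_le_of_ne h hne
          have hw : ((m:ℝ) / Mseq 0) ∈ I :=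
            image_affine_between ha hzI hy0I hlt.le hlow.le
          exact hInot _ hw ⟨m, hmlt.le, rfl⟩
        · have hw : (((m:ℝ) + 1) / Mseq 0) ∈ I :=
            image_affine_between ha hy0I hzI hhigh.le h
          exact hInot _ hw ⟨m + 1, by omega, by push_cast; ring⟩
      obtain ⟨a', c', ha', hfa', _, _⟩ := hadapt 0 ⟨m, hmlt⟩
      refine ⟨a' * a, a' * c + c', mul_ne_zero ha' ha, fun x hx => ?_⟩
      have hmem : S^[j] x ∈ atomE (Mseq 0) ⟨m, hmlt⟩ := by
        have := hclaim x hx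
        simpa [atomE] using this
      rw [Function.iterate_succ_apply', hfa' _ hmem, hfa x hx]
      ring

/-- for an admissible sequence of partitions for `S`, `n ≥ 1`,
every atom `E` of the `M_n`-equal partition, and every `1 ≤ j ≤ n+1`, the
iterate `S^j` is injective on `E`. -/
theorem stmt_6 (S : ℝ → ℝ) (hSmaps : Set.MapsTo S (Set.Icc 0 1) (Set.Icc 0 1))
    (Mseq : ℕ → ℕ) (hadm : AdmissibleSeq S Mseq) (n : ℕ) (hn : 1 ≤ n) :
    ∀ k : Fin (Mseq n), ∀ j : ℕ, 1 ≤ j → j ≤ n + 1 →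
      Set.InjOn (S^[j]) (atomE (Mseq n) k) := by
  intro k j hj1 hj2
  obtain ⟨a, c, ha, hfa⟩ := iter_affine_on_atom S hSmaps Mseq hadm n hn k j hj1 hj2
  intro x hx y hy hxy
  rw [hfa x hx, hfa y hy] at hxy
  have : a * x = a * y := by linarith
  exact mul_left_cancel₀ ha this
end
end

section
/- Let S : [0,1] → [0,1] and let (M_n) be an admissible sequence of partitions for S. Fix n ≥ 1 and write E_1, …, E_{M_n} for the atoms of the M_n-equal partition. Let k_0, k_n ∈ {1,…,M_n} be indices such that S^n(E_{k_0}) ⊇ E_{k_n}. Then there exists a unique sequence (k_1, …, k_{n-1}) ∈ {1,…,M_n}^{n-1} such that every x ∈ E_{k_0} with S^n(x) ∈ E_{k_n} satisfies S^j(x) ∈ E_{k_j} for all 1 ≤ j ≤ n−1. -/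
open MeasureTheory Set Filter Matrix

noncomputable section

namespace Stmt7Aux

def gridM (M : ℕ) : Set ℝ := {y : ℝ | ∃ i : ℤ, y = (i : ℝ) / M}

lemma endpts_subset_gridM (M : ℕ) : endpts M ⊆ gridM M := by
  rintro x ⟨i, _, rfl⟩; exact ⟨i, by push_cast; ring⟩

lemma gridM_mono {M0 M : ℕ} (h : M0 ∣ M) (hM : 0 < M) : gridM M0 ⊆ gridM M := by
  rcases h with ⟨d, rfl⟩
  have hd : (0:ℝ) < (d:ℝ) := by
    have : 0 < d := Nat.pos_of_mul_pos_left (by rwa [mul_comm] at hM)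
    exact_mod_cast this
  rintro x ⟨i, rfl⟩
  refine ⟨i * d, ?_⟩
  push_cast
  rw [mul_div_mul_right _ _ (ne_of_gt hd)]

lemma atom_not_mem_gridM {M : ℕ} (hM : 0 < M) {u : Fin M} {x : ℝ}
    (hx : x ∈ atomE M u) : x ∉ gridM M := by
  rintro ⟨i, rfl⟩
  obtain ⟨h1, h2⟩ := hx
  have hMR : (0:ℝ) < M := by exact_mod_cast hM
  have l1 : (u:ℝ) < (i:ℝ) := by
    have := (div_lt_div_iff₀ hMR hMR).mp h1; nlinarith
  have l2 : (i:ℝ) < (u:ℝ) + 1 := by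
    have := (div_lt_div_iff₀ hMR hMR).mp h2; nlinarith
  have i1 : ((u:ℕ):ℤ) < i := by exact_mod_cast l1
  have i2 : i < ((u:ℕ):ℤ) + 1 := by exact_mod_cast l2
  omega

lemma atom_eq_of_mem {M : ℕ} {u v : Fin M} {x : ℝ}
    (hu : x ∈ atomE M u) (hv : x ∈ atomE M v) : u = v := by
  have hM : 0 < M := u.pos
  have hMR : (0:ℝ) < M := by exact_mod_cast hM
  obtain ⟨hu1, hu2⟩ := hu
  obtain ⟨hv1, hv2⟩ := hv
  have l1 : (u:ℝ) < (v:ℝ) + 1 := by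
    have := lt_trans hu1 hv2
    have := (div_lt_div_iff₀ hMR hMR).mp this; nlinarith
  have l2 : (v:ℝ) < (u:ℝ) + 1 := by
    have := lt_trans hv1 hu2
    have := (div_lt_div_iff₀ hMR hMR).mp this; nlinarith
  have n1 : (u:ℕ) < (v:ℕ) + 1 := by exact_mod_cast l1
  have n2 : (v:ℕ) < (u:ℕ) + 1 := by exact_mod_cast l2
  exact Fin.ext (by omega)

lemma atom_subset_Icc {M : ℕ} (u : Fin M) : atomE M u ⊆ Icc 0 1 := by
  have hM : 0 < M := u.pos
  have hMR : (0:ℝ) < M := by exact_mod_cast hM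
  rintro x ⟨h1, h2⟩
  constructor
  · have : (0:ℝ) ≤ (u:ℝ)/M := by positivity
    linarith
  · have hu1 : ((u:ℕ):ℝ) + 1 ≤ M := by exact_mod_cast u.isLt
    have : ((u:ℝ)+1)/M ≤ 1 := by rw [div_le_one hMR]; exact hu1
    linarith

lemma mem_atom_of {M : ℕ} (hM : 0 < M) {y : ℝ} (hy : y ∈ Icc (0:ℝ) 1)
    (hg : y ∉ gridM M) : ∃ u : Fin M, y ∈ atomE M u := by
  have hMR : (0:ℝ) < M := by exact_mod_cast hM
  set z : ℤ := ⌊y * M⌋ with hz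
  have hz0 : 0 ≤ z := Int.le_floor.mpr (by push_cast; nlinarith [hy.1])
  have hne : y * M ≠ z := by
    intro h
    exact hg ⟨z, by rw [← h, mul_div_assoc, div_self (ne_of_gt hMR), mul_one]⟩
  have hfl : (z:ℝ) ≤ y * M := Int.floor_le _
  have hflt : (z:ℝ) < y * M := lt_of_le_of_ne hfl (by intro h; exact hne h.symm)
  have hlt1 : y * M < z + 1 := Int.lt_floor_add_one _
  have hzM : z < M := by
    have hyM : y * M ≤ M := by nlinarith [hy.2]
    have : (z:ℝ) < M := lt_of_lt_of_le hflt hyM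
    exact_mod_cast this
  refine ⟨⟨z.toNat, by omega⟩, ?_, ?_⟩
  · show ((z.toNat : ℕ):ℝ)/M < y
    rw [div_lt_iff₀ hMR]
    have : ((z.toNat : ℕ):ℝ) = (z:ℝ) := by exact_mod_cast Int.toNat_of_nonneg hz0
    rw [this]; linarith
  · show y < (((z.toNat : ℕ):ℝ) + 1)/M
    rw [lt_div_iff₀ hMR]
    have : ((z.toNat : ℕ):ℝ) = (z:ℝ) := by exact_mod_cast Int.toNat_of_nonneg hz0
    rw [this]; linarith

lemma affine_mem_Ioo_iff {a c u v y : ℝ} (ha : a ≠ 0) (huv : u < v) :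
    (∃ x, x ∈ Ioo u v ∧ a*x+c = y) ↔
      y ∈ Ioo (min (a*u+c) (a*v+c)) (max (a*u+c) (a*v+c)) := by
  rcases ha.lt_or_gt with h | h
  · have e1 : min (a*u+c) (a*v+c) = a*v+c := by
      apply min_eq_right; nlinarith
    have e2 : max (a*u+c) (a*v+c) = a*u+c := by
      apply max_eq_left; nlinarith
    rw [e1, e2]
    constructor
    · rintro ⟨x, ⟨h1, h2⟩, rfl⟩
      constructor <;> nlinarith
    · rintro ⟨h1, h2⟩
      refine ⟨(y - c)/a, ⟨?_, ?_⟩, by field_simp; ring⟩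
      · rw [lt_div_iff_of_neg h]; nlinarith
      · rw [div_lt_iff_of_neg h]; nlinarith
  · have e1 : min (a*u+c) (a*v+c) = a*u+c := by
      apply min_eq_left; nlinarith
    have e2 : max (a*u+c) (a*v+c) = a*v+c := by
      apply max_eq_right; nlinarith
    rw [e1, e2]
    constructor
    · rintro ⟨x, ⟨h1, h2⟩, rfl⟩
      constructor <;> nlinarith
    · rintro ⟨h1, h2⟩
      refine ⟨(y - c)/a, ⟨?_, ?_⟩, by field_simp; ring⟩
      · rw [lt_div_iff₀ h]; nlinarith
      · rw [div_lt_iff₀ h]; nlinarith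

lemma affine_mem_uIcc (a c : ℝ) {x1 x2 z : ℝ} (hz : z ∈ uIcc x1 x2) :
    a*z+c ∈ uIcc (a*x1+c) (a*x2+c) := by
  rw [Set.mem_uIcc] at hz ⊢
  rcases le_total a 0 with ha | ha <;>
    rcases hz with ⟨h1, h2⟩ | ⟨h1, h2⟩
  · right; constructor <;> nlinarith
  · left; constructor <;> nlinarith
  · left; constructor <;> nlinarith
  · right; constructor <;> nlinarith

lemma iterate_mem_Icc {S : ℝ → ℝ} (hS : Set.MapsTo S (Icc 0 1) (Icc 0 1)) :
    ∀ (j : ℕ) (x : ℝ), x ∈ Icc (0:ℝ) 1 → S^[j] x ∈ Icc (0:ℝ) 1 := by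
  intro j
  induction j with
  | zero => intro x hx; simpa using hx
  | succ j ih =>
    intro x hx
    rw [Function.iterate_succ_apply']
    exact hS (ih x hx)

end Stmt7Aux

set_option maxHeartbeats 2000000 in
open Stmt7Aux in
/-- for an admissible sequence of partitions for `S`, `n ≥ 1`, and
atoms `E_{k₀}`, `E_{kₙ}` with `S^n(E_{k₀}) ⊇ E_{kₙ}`, there is a unique path
`(k_j)_{j=0}^n` with prescribed endpoints such that every `x ∈ E_{k₀}` with
`S^n(x) ∈ E_{kₙ}` satisfies `S^j(x) ∈ E_{k_j}` for all `j`. -/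
theorem stmt_7 (S : ℝ → ℝ) (hSmaps : Set.MapsTo S (Set.Icc 0 1) (Set.Icc 0 1))
    (Mseq : ℕ → ℕ) (hadm : AdmissibleSeq S Mseq) (n : ℕ) (hn : 1 ≤ n)
    (k0 kn : Fin (Mseq n)) (hcover : atomE (Mseq n) kn ⊆ S^[n] '' atomE (Mseq n) k0) :
    ∃! k : Fin (n + 1) → Fin (Mseq n),
      k 0 = k0 ∧ k (Fin.last n) = kn ∧
      ∀ x ∈ atomE (Mseq n) k0, S^[n] x ∈ atomE (Mseq n) kn →
        ∀ j : Fin (n + 1), S^[(j : ℕ)] x ∈ atomE (Mseq n) (k j) := by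
  classical
  obtain ⟨hpos, hdvd, hadapt, hpre⟩ := hadm
  have hM : 0 < Mseq n := hpos n
  have hMR : (0:ℝ) < Mseq n := by exact_mod_cast hM
  have hM0 : 0 < Mseq 0 := hpos 0
  have hM0R : (0:ℝ) < Mseq 0 := by exact_mod_cast hM0
  have hdvd0n : Mseq 0 ∣ Mseq n := by
    have h : ∀ m, Mseq 0 ∣ Mseq m := by
      intro m
      induction m with
      | zero => exact dvd_rfl
      | succ m ih => exact ih.trans (hdvd m)
    exact h n
  obtain ⟨d, hd⟩ := hdvd0n
  have hdpos : 0 < d := by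
    rcases Nat.eq_zero_or_pos d with h | h
    · rw [h, mul_zero] at hd; omega
    · exact h
  have hdR : (0:ℝ) < d := by exact_mod_cast hdpos
  have hMeq : (Mseq n : ℝ) = (Mseq 0 : ℝ) * d := by exact_mod_cast hd
  -- MAIN INDUCTION
  have main : ∀ j : ℕ, j ≤ n →
      (∃ α γ : ℝ, ∃ p q : ℕ, α ≠ 0 ∧ p < q ∧ q ≤ Mseq n ∧
        (∀ x ∈ atomE (Mseq n) k0, S^[j] x = α*x+γ) ∧
        (∀ y : ℝ, (∃ x ∈ atomE (Mseq n) k0, α*x+γ = y) ↔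
            y ∈ Ioo ((p:ℝ)/(Mseq n)) ((q:ℝ)/(Mseq n)))) ∧
      (∀ x ∈ atomE (Mseq n) k0, ∀ i ≤ j, S^[i] x ∈ gridM (Mseq n) →
        S^[j] x ∈ gridM (Mseq n)) := by
    intro j
    induction j with
    | zero =>
      intro _
      refine ⟨⟨1, 0, (k0:ℕ), (k0:ℕ)+1, one_ne_zero, Nat.lt_succ_self _,
        k0.isLt, ?_, ?_⟩, ?_⟩
      · intro x _; simp
      · intro y
        have hco : (((k0:ℕ)+1 : ℕ):ℝ) = ((k0:ℕ):ℝ)+1 := by push_cast; ring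
        constructor
        · rintro ⟨x, hx, rfl⟩
          simp only [one_mul, add_zero]
          exact ⟨hx.1, by rw [hco]; exact hx.2⟩
        · intro hy
          exact ⟨y, ⟨hy.1, by rw [← hco]; exact hy.2⟩, by ring⟩
      · intro x _ i hi hg
        have : i = 0 := by omega
        subst this
        exact hg
    | succ j ih =>
      intro hj1
      have hjn : j ≤ n := by omega
      obtain ⟨⟨α, γ, p, q, hα, hpq, hqM, hform, himg⟩, hGP⟩ := ih hjn
      have hpc : (p:ℝ) < (q:ℝ) := by exact_mod_cast hpq
      have hqc : (q:ℝ) ≤ Mseq n := by exact_mod_cast hqM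
      have hpqR : (p:ℝ)/(Mseq n) < (q:ℝ)/(Mseq n) := by
        rw [div_lt_div_iff₀ hMR hMR]; nlinarith
      have hq1 : (q:ℝ)/(Mseq n) ≤ 1 := by rw [div_le_one hMR]; exact hqc
      have hp0 : (0:ℝ) ≤ (p:ℝ)/(Mseq n) := by positivity
      -- J avoids endpts (Mseq 0)
      have havoid : ∀ y ∈ Ioo ((p:ℝ)/(Mseq n)) ((q:ℝ)/(Mseq n)),
          y ∉ endpts (Mseq 0) := by
        intro y hy hye
        obtain ⟨x, hx, hxy⟩ := (himg y).mpr hy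
        have hSjx : S^[j] x = y := by rw [hform x hx]; exact hxy
        rcases Nat.eq_zero_or_pos j with hj0 | hj0
        · subst hj0
          simp only [Function.iterate_zero_apply] at hSjx
          subst hSjx
          exact atom_not_mem_gridM hM hx
            (gridM_mono ⟨d, hd⟩ hM (endpts_subset_gridM _ hye))
        · have hx1 : x ∈ Set.Icc (0:ℝ) 1 := atom_subset_Icc _ hx
          have : x ∈ (S^[j]) ⁻¹' endpts (Mseq 0) ∩ Set.Icc 0 1 :=
            ⟨by simp only [Set.mem_preimage]; rw [hSjx]; exact hye, hx1⟩
          have hxe : x ∈ endpts (Mseq n) := hpre n j hj0 hjn this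
          exact atom_not_mem_gridM hM hx (endpts_subset_gridM _ hxe)
      -- J is inside one atom of the level-0 partition
      have hbex : ∃ b : Fin (Mseq 0),
          Ioo ((p:ℝ)/(Mseq n)) ((q:ℝ)/(Mseq n)) ⊆ atomE (Mseq 0) b := by
        set β : ℤ := ⌊(p:ℝ)/(Mseq n) * (Mseq 0)⌋ with hβ
        have hβ0 : 0 ≤ β := Int.le_floor.mpr (by push_cast; positivity)
        have hp1 : (p:ℝ)/(Mseq n) < 1 := lt_of_lt_of_le hpqR hq1
        have hβlt : β < Mseq 0 := by
          have h1 : (β:ℝ) ≤ (p:ℝ)/(Mseq n) * (Mseq 0) := Int.floor_le _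
          have h2 : (p:ℝ)/(Mseq n) * (Mseq 0) < Mseq 0 := by nlinarith
          have : (β:ℝ) < (Mseq 0 : ℝ) := lt_of_le_of_lt h1 h2
          exact_mod_cast this
        have hlow : (β:ℝ)/(Mseq 0) ≤ (p:ℝ)/(Mseq n) := by
          rw [div_le_iff₀ hM0R]; exact Int.floor_le _
        have hupper : (q:ℝ)/(Mseq n) ≤ ((β:ℝ)+1)/(Mseq 0) := by
          by_contra hcon
          push_neg at hcon
          have hplow : (p:ℝ)/(Mseq n) < ((β:ℝ)+1)/(Mseq 0) := by
            rw [lt_div_iff₀ hM0R]; exact Int.lt_floor_add_one _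
          have hgmem : ((β:ℝ)+1)/(Mseq 0) ∈ Ioo ((p:ℝ)/(Mseq n)) ((q:ℝ)/(Mseq n)) :=
            ⟨hplow, hcon⟩
          refine havoid _ hgmem ⟨(β+1).toNat, ?_, ?_⟩
          · have hlt : ((β:ℝ)+1)/(Mseq 0) < 1 := lt_of_lt_of_le hcon hq1
            rw [div_lt_one hM0R] at hlt
            have : β + 1 ≤ (Mseq 0 : ℤ) := by exact_mod_cast hlt.le
            omega
          · have : (((β+1).toNat : ℕ) : ℝ) = (β:ℝ)+1 := by
              have := Int.toNat_of_nonneg (by omega : (0:ℤ) ≤ β + 1)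
              exact_mod_cast this
            rw [this]
        refine ⟨⟨β.toNat, by omega⟩, ?_⟩
        have hcast : ((β.toNat : ℕ) : ℝ) = (β:ℝ) := by
          exact_mod_cast Int.toNat_of_nonneg hβ0
        rintro y ⟨h1, h2⟩
        constructor
        · show ((β.toNat : ℕ):ℝ)/(Mseq 0) < y
          rw [hcast]
          exact lt_of_le_of_lt hlow h1
        · show y < (((β.toNat : ℕ):ℝ)+1)/(Mseq 0)
          rw [hcast]
          exact lt_of_lt_of_le h2 hupper
      obtain ⟨b, hbsub⟩ := hbex
      obtain ⟨a₀, c₀, ha₀, hSform, he1, he2⟩ := hadapt 0 b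
      obtain ⟨i1, hi1M, hi1⟩ := he1
      obtain ⟨i2, hi2M, hi2⟩ := he2
      have hM0ne : (Mseq 0 : ℝ) ≠ 0 := ne_of_gt hM0R
      -- the slope is an integer, the intercept a lattice point
      have hkey1 : a₀ * (b:ℝ) + c₀ * (Mseq 0) = i1 := by
        field_simp at hi1
        linarith
      have hkey2 : a₀ * ((b:ℝ)+1) + c₀ * (Mseq 0) = i2 := by
        field_simp at hi2
        linarith
      have hkey : a₀ = (i2:ℝ) - (i1:ℝ) := by nlinarith [hkey1, hkey2]
      obtain ⟨A, hAdef⟩ : ∃ A : ℤ, A = (i2:ℤ) - (i1:ℤ) := ⟨_, rfl⟩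
      have hA : (A:ℝ) = a₀ := by rw [hAdef, hkey]; push_cast; ring
      have hAne : A ≠ 0 := by
        intro h
        apply ha₀
        rw [← hA, h, Int.cast_zero]
      obtain ⟨C, hCdef⟩ : ∃ C : ℤ, C = ((i1:ℤ) - A*(b:ℕ)) * d := ⟨_, rfl⟩
      have hc₀ : c₀ = ((i1:ℝ) - a₀*(b:ℝ))/(Mseq 0) := by
        field_simp
        linarith [hkey1]
      have hC : c₀ = (C:ℝ)/(Mseq n) := by
        rw [hc₀, hMeq, hCdef]
        push_cast
        rw [hA]
        rw [mul_div_mul_right _ _ (ne_of_gt hdR)]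
      have hdivle : ∀ X Y : ℤ, X ≤ Y → (X:ℝ)/(Mseq n) ≤ (Y:ℝ)/(Mseq n) := by
        intro X Y h
        have hXY : (X:ℝ) ≤ (Y:ℝ) := by exact_mod_cast h
        rw [div_le_div_iff₀ hMR hMR]
        nlinarith
      -- new affine formula
      have hmemJ : ∀ x ∈ atomE (Mseq n) k0,
          α*x+γ ∈ Ioo ((p:ℝ)/(Mseq n)) ((q:ℝ)/(Mseq n)) := by
        intro x hx
        exact (himg _).mp ⟨x, hx, rfl⟩
      have hform' : ∀ x ∈ atomE (Mseq n) k0,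
          S^[j+1] x = (a₀*α)*x + (a₀*γ + c₀) := by
        intro x hx
        rw [Function.iterate_succ_apply', hform x hx,
          hSform _ (hbsub (hmemJ x hx))]
        ring
      -- new image
      have himg' : ∀ y : ℝ, (∃ x ∈ atomE (Mseq n) k0, (a₀*α)*x + (a₀*γ+c₀) = y) ↔
          y ∈ Ioo (min (a₀*((p:ℝ)/(Mseq n))+c₀) (a₀*((q:ℝ)/(Mseq n))+c₀))
                  (max (a₀*((p:ℝ)/(Mseq n))+c₀) (a₀*((q:ℝ)/(Mseq n))+c₀)) := by
        intro y
        constructor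
        · rintro ⟨x, hx, rfl⟩
          exact (affine_mem_Ioo_iff ha₀ hpqR).mp ⟨α*x+γ, hmemJ x hx, by ring⟩
        · intro hy
          obtain ⟨v, hv, hvy⟩ := (affine_mem_Ioo_iff ha₀ hpqR).mpr hy
          obtain ⟨x, hx, hxv⟩ := (himg v).mpr hv
          exact ⟨x, hx, by rw [← hvy, ← hxv]; ring⟩
      -- integer endpoints
      have hw1 : a₀*((p:ℝ)/(Mseq n))+c₀ = ((A*(p:ℕ) + C : ℤ):ℝ)/(Mseq n) := by
        rw [← hA, hC]; push_cast; ring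
      have hw2 : a₀*((q:ℝ)/(Mseq n))+c₀ = ((A*(q:ℕ) + C : ℤ):ℝ)/(Mseq n) := by
        rw [← hA, hC]; push_cast; ring
      obtain ⟨Z1, hZ1⟩ : ∃ Z : ℤ, Z = min (A*(p:ℕ) + C) (A*(q:ℕ) + C) := ⟨_, rfl⟩
      obtain ⟨Z2, hZ2⟩ : ∃ Z : ℤ, Z = max (A*(p:ℕ) + C) (A*(q:ℕ) + C) := ⟨_, rfl⟩
      have hm1 : min (a₀*((p:ℝ)/(Mseq n))+c₀) (a₀*((q:ℝ)/(Mseq n))+c₀)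
          = (Z1:ℝ)/(Mseq n) := by
        rw [hw1, hw2, hZ1]
        rcases le_total (A*(p:ℕ) + C) (A*(q:ℕ) + C) with h | h
        · rw [min_eq_left h]
          exact min_eq_left (hdivle _ _ h)
        · rw [min_eq_right h]
          exact min_eq_right (hdivle _ _ h)
      have hm2 : max (a₀*((p:ℝ)/(Mseq n))+c₀) (a₀*((q:ℝ)/(Mseq n))+c₀)
          = (Z2:ℝ)/(Mseq n) := by
        rw [hw1, hw2, hZ2]
        rcases le_total (A*(p:ℕ) + C) (A*(q:ℕ) + C) with h | h
        · rw [max_eq_right h]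
          exact max_eq_right (hdivle _ _ h)
        · rw [max_eq_left h]
          exact max_eq_left (hdivle _ _ h)
      have hZlt : Z1 < Z2 := by
        have hne : A*(p:ℕ) + C ≠ A*(q:ℕ) + C := by
          intro h
          have h' : A * (p:ℕ) = A * (q:ℕ) := by omega
          have h'' : ((p:ℕ):ℤ) = ((q:ℕ):ℤ) := mul_left_cancel₀ hAne h'
          omega
        rw [hZ1, hZ2]
        exact min_lt_max.mpr hne
      have hZltR : (Z1:ℝ)/(Mseq n) < (Z2:ℝ)/(Mseq n) := by
        rw [div_lt_div_iff₀ hMR hMR]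
        have : (Z1:ℝ) < (Z2:ℝ) := by exact_mod_cast hZlt
        nlinarith
      -- image inside [0,1]
      have hsubIcc : Ioo ((Z1:ℝ)/(Mseq n)) ((Z2:ℝ)/(Mseq n)) ⊆ Icc (0:ℝ) 1 := by
        intro y hy
        rw [← hm1, ← hm2] at hy
        obtain ⟨x, hx, hxy⟩ := (himg' y).mpr hy
        rw [← hxy, ← hform' x hx]
        exact iterate_mem_Icc hSmaps (j+1) x (atom_subset_Icc _ hx)
      have hZ10 : 0 ≤ Z1 := by
        by_contra hcon
        push_neg at hcon
        have hm1neg : (Z1:ℝ)/(Mseq n) < 0 := by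
          apply div_neg_of_neg_of_pos _ hMR
          exact_mod_cast hcon
        set t : ℝ := min ((Z2:ℝ)/(Mseq n)) 0 with ht
        have ht1 : (Z1:ℝ)/(Mseq n) < t := lt_min hZltR hm1neg
        have hmem : ((Z1:ℝ)/(Mseq n) + t)/2 ∈ Ioo ((Z1:ℝ)/(Mseq n)) ((Z2:ℝ)/(Mseq n)) := by
          constructor
          · linarith
          · have := min_le_left ((Z2:ℝ)/(Mseq n)) 0
            linarith
        have := (hsubIcc hmem).1
        have := min_le_right ((Z2:ℝ)/(Mseq n)) 0
        linarith
      have hZ2M : Z2 ≤ (Mseq n : ℤ) := by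
        by_contra hcon
        push_neg at hcon
        have hm2gt : (1:ℝ) < (Z2:ℝ)/(Mseq n) := by
          rw [lt_div_iff₀ hMR]
          have : (Mseq n : ℝ) < (Z2:ℝ) := by exact_mod_cast hcon
          linarith
        set t : ℝ := max ((Z1:ℝ)/(Mseq n)) 1 with ht
        have ht1 : t < (Z2:ℝ)/(Mseq n) := max_lt hZltR hm2gt
        have hmem : (t + (Z2:ℝ)/(Mseq n))/2 ∈ Ioo ((Z1:ℝ)/(Mseq n)) ((Z2:ℝ)/(Mseq n)) := by
          constructor
          · have := le_max_left ((Z1:ℝ)/(Mseq n)) 1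
            linarith
          · linarith
        have := (hsubIcc hmem).2
        have := le_max_right ((Z1:ℝ)/(Mseq n)) 1
        linarith
      -- package new data
      have hcast1 : ((Z1.toNat : ℕ) : ℝ) = (Z1:ℝ) := by
        exact_mod_cast Int.toNat_of_nonneg hZ10
      have hcast2 : ((Z2.toNat : ℕ) : ℝ) = (Z2:ℝ) := by
        exact_mod_cast Int.toNat_of_nonneg (by omega : (0:ℤ) ≤ Z2)
      refine ⟨⟨a₀*α, a₀*γ+c₀, Z1.toNat, Z2.toNat, mul_ne_zero ha₀ hα,
        by omega, by omega, hform', ?_⟩, ?_⟩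
      · intro y
        rw [himg' y, hm1, hm2, hcast1, hcast2]
      · -- grid propagation
        intro x hx i hi hg
        rcases Nat.lt_or_ge i (j+1) with hlt | hge
        · have hgj : S^[j] x ∈ gridM (Mseq n) := hGP x hx i (by omega) hg
          obtain ⟨z, hz⟩ := hgj
          have hmm : S^[j] x ∈ Ioo ((p:ℝ)/(Mseq n)) ((q:ℝ)/(Mseq n)) := by
            rw [hform x hx]; exact hmemJ x hx
          refine ⟨A*z + C, ?_⟩
          rw [Function.iterate_succ_apply', hSform _ (hbsub hmm), hz, ← hA, hC]
          push_cast
          ring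
        · have : i = j+1 := by omega
          subst this
          exact hg
  -- derived facts
  have hGPn := (main n le_rfl).2
  have havoidall : ∀ x ∈ atomE (Mseq n) k0, S^[n] x ∈ atomE (Mseq n) kn →
      ∀ j ≤ n, S^[j] x ∉ gridM (Mseq n) := by
    intro x hx hxn j hj hg
    exact atom_not_mem_gridM hM hxn (hGPn x hx j hj hg)
  -- same-atom claim
  have hkeylt : ∀ x1 ∈ atomE (Mseq n) k0, ∀ x2 ∈ atomE (Mseq n) k0,
      S^[n] x1 ∈ atomE (Mseq n) kn → S^[n] x2 ∈ atomE (Mseq n) kn →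
      ∀ j ≤ n, ∀ u1 u2 : Fin (Mseq n),
        S^[j] x1 ∈ atomE (Mseq n) u1 → S^[j] x2 ∈ atomE (Mseq n) u2 →
        (u1:ℕ) < (u2:ℕ) → False := by
    intro x1 hx1 x2 hx2 hn1 hn2 j hj u1 u2 h1 h2 hlt
    obtain ⟨α, γ, p, q, hα, _, _, hform, _⟩ := (main j hj).1
    obtain ⟨αn, γn, pn, qn, hαn, _, _, hformn, _⟩ := (main n le_rfl).1
    have hv1 : α*x1+γ ∈ atomE (Mseq n) u1 := by rw [← hform x1 hx1]; exact h1
    have hv2 : α*x2+γ ∈ atomE (Mseq n) u2 := by rw [← hform x2 hx2]; exact h2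
    have hg1 : α*x1+γ < ((u1:ℝ)+1)/(Mseq n) := hv1.2
    have hg2 : ((u1:ℝ)+1)/(Mseq n) < α*x2+γ := by
      have hcast : ((u1:ℝ)+1) ≤ (u2:ℝ) := by exact_mod_cast hlt
      have hle : ((u1:ℝ)+1)/(Mseq n) ≤ ((u2:ℝ))/(Mseq n) := by
        rw [div_le_div_iff₀ hMR hMR]
        nlinarith
      exact lt_of_le_of_lt hle hv2.1
    have hcont : ContinuousOn (fun x : ℝ => α*x+γ) (uIcc x1 x2) := by
      apply Continuous.continuousOn
      continuity
    have hgmem : ((u1:ℝ)+1)/(Mseq n) ∈ uIcc (α*x1+γ) (α*x2+γ) :=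
      Set.mem_uIcc.mpr (Or.inl ⟨hg1.le, hg2.le⟩)
    obtain ⟨z, hzu, hzg⟩ := intermediate_value_uIcc hcont hgmem
    have hoc0 : (atomE (Mseq n) k0).OrdConnected := by
      unfold atomE; exact Set.ordConnected_Ioo
    have hocn : (atomE (Mseq n) kn).OrdConnected := by
      unfold atomE; exact Set.ordConnected_Ioo
    have hz0 : z ∈ atomE (Mseq n) k0 := hoc0.uIcc_subset hx1 hx2 hzu
    have hzn : S^[n] z ∈ atomE (Mseq n) kn := by
      rw [hformn z hz0]
      have hmem := affine_mem_uIcc αn γn hzu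
      have hw1 : αn*x1+γn ∈ atomE (Mseq n) kn := by rw [← hformn x1 hx1]; exact hn1
      have hw2 : αn*x2+γn ∈ atomE (Mseq n) kn := by rw [← hformn x2 hx2]; exact hn2
      exact hocn.uIcc_subset hw1 hw2 hmem
    have hzg' : α*z+γ = ((u1:ℝ)+1)/(Mseq n) := hzg
    apply havoidall z hz0 hzn j hj
    rw [hform z hz0, hzg']
    exact ⟨((u1:ℕ):ℤ)+1, by push_cast; ring⟩
  have hsame : ∀ x1 ∈ atomE (Mseq n) k0, ∀ x2 ∈ atomE (Mseq n) k0,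
      S^[n] x1 ∈ atomE (Mseq n) kn → S^[n] x2 ∈ atomE (Mseq n) kn →
      ∀ j ≤ n, ∀ u1 u2 : Fin (Mseq n),
        S^[j] x1 ∈ atomE (Mseq n) u1 → S^[j] x2 ∈ atomE (Mseq n) u2 → u1 = u2 := by
    intro x1 hx1 x2 hx2 hn1 hn2 j hj u1 u2 h1 h2
    rcases lt_trichotomy (u1:ℕ) (u2:ℕ) with h | h | h
    · exact absurd h (fun h => hkeylt x1 hx1 x2 hx2 hn1 hn2 j hj u1 u2 h1 h2 h)
    · exact Fin.ext h
    · exact absurd h (fun h => hkeylt x2 hx2 x1 hx1 hn2 hn1 j hj u2 u1 h2 h1 h)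
  -- pick a good point
  have hknlt : ((kn:ℝ))/(Mseq n) < ((kn:ℝ)+1)/(Mseq n) := by
    rw [div_lt_div_iff₀ hMR hMR]; nlinarith
  have hmid : ((kn:ℝ)/(Mseq n) + ((kn:ℝ)+1)/(Mseq n))/2 ∈ atomE (Mseq n) kn :=
    ⟨by linarith, by linarith⟩
  obtain ⟨x₀, hx₀, hx₀n⟩ := hcover hmid
  have hx₀good : S^[n] x₀ ∈ atomE (Mseq n) kn := by rw [hx₀n]; exact hmid
  -- the path
  have hexatom : ∀ j : Fin (n+1), ∃ u : Fin (Mseq n),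
      S^[(j:ℕ)] x₀ ∈ atomE (Mseq n) u := by
    intro j
    exact mem_atom_of hM
      (iterate_mem_Icc hSmaps _ _ (atom_subset_Icc _ hx₀))
      (havoidall x₀ hx₀ hx₀good (j:ℕ) (Fin.is_le j))
  set k : Fin (n+1) → Fin (Mseq n) := fun j => (hexatom j).choose with hkdef
  have hk : ∀ j : Fin (n+1), S^[(j:ℕ)] x₀ ∈ atomE (Mseq n) (k j) :=
    fun j => (hexatom j).choose_spec
  refine ⟨k, ⟨?_, ?_, ?_⟩, ?_⟩
  · have h0 := hk 0
    simp only [Fin.val_zero, Function.iterate_zero_apply] at h0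
    exact atom_eq_of_mem h0 hx₀
  · have hl := hk (Fin.last n)
    simp only [Fin.val_last] at hl
    exact atom_eq_of_mem hl hx₀good
  · intro x hx hxn j
    obtain ⟨u, hu⟩ := mem_atom_of hM
      (iterate_mem_Icc hSmaps _ _ (atom_subset_Icc _ hx))
      (havoidall x hx hxn (j:ℕ) (Fin.is_le j))
    have := hsame x hx x₀ hx₀ hxn hx₀good (j:ℕ) (Fin.is_le j) u (k j) hu (hk j)
    rwa [← this]
  · rintro k' ⟨h0, hl, hprop⟩
    funext j
    exact atom_eq_of_mem (hprop x₀ hx₀ hx₀good j) (hk j)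
end
end

section
/- Let S : [0,1] → [0,1] preserve μ and let (M_n) be an admissible sequence of partitions for S. For n ≥ 1, define a relation on the index set {1,…,M_n} of the atoms of the M_n-equal partition by j ≈ k if and only if S(E_j) ∩ S(E_k) ≠ ∅, and let ∼ be the equivalence relation generated by ≈. Then there exists a constant C > 0 depending only on S and M_0 (not on n) such that for every n ≥ 1, every equivalence class of ∼ contains at most C elements. -/
open MeasureTheory Set Filter Matrix

noncomputable section

lemma auxAffineIoo {a : ℝ} (c p q : ℝ) (ha : a ≠ 0) (h : p < q) :
    (fun x => a*x+c) '' Set.Ioo p q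
      = Set.Ioo (min (a*p+c) (a*q+c)) (max (a*p+c) (a*q+c)) := by
  rcases lt_or_gt_of_ne ha with hneg | hpos
  · have h1 : (fun x => a*x+c) = (fun x => (-a) * x + c) ∘ (fun x : ℝ => -x) := by
      funext x; simp
    rw [h1, Set.image_comp]
    have h2 : (fun x : ℝ => -x) '' Set.Ioo p q = Set.Ioo (-q) (-p) := by
      rw [show (fun x : ℝ => -x) = Neg.neg from rfl, Set.image_neg_eq_neg, Set.neg_Ioo]
    rw [h2, Set.image_affine_Ioo (by linarith) c (-q) (-p)]
    rw [min_eq_right (by nlinarith), max_eq_left (by nlinarith)]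
    ring_nf
  · rw [Set.image_affine_Ioo hpos c p q,
      min_eq_left (by nlinarith), max_eq_right (by nlinarith)]

lemma auxEqvGenIff {α : Type*} {r : α → α → Prop} {Q : α → Prop}
    (h : ∀ x y, r x y → (Q x ↔ Q y)) :
    ∀ {x y}, Relation.EqvGen r x y → (Q x ↔ Q y) := by
  intro x y hxy
  induction hxy with
  | rel a b hab => exact h a b hab
  | refl => exact Iff.rfl
  | symm a b _ ih => exact ih.symm
  | trans a b c _ _ ih1 ih2 => exact ih1.trans ih2

lemma auxDiv (L e : ℤ) (hL : 0 < L) : L * (e / L) ≤ e ∧ e < L * (e / L) + L := by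
  have h1 : L * (e / L) + e % L = e := Int.mul_ediv_add_emod e L
  have h2 : 0 ≤ e % L := Int.emod_nonneg e (ne_of_gt hL)
  have h3 : e % L < L := Int.emod_lt_of_pos e hL
  omega

lemma auxMain (S : ℝ → ℝ) (hSmaps : Set.MapsTo S (Set.Icc 0 1) (Set.Icc 0 1))
    (M₀ N D : ℕ) (hM : 0 < M₀) (hD : 0 < D) (hND : N = M₀ * D)
    (a c : Fin M₀ → ℝ) (α : Fin M₀ → ℤ) (q1 q2 : Fin M₀ → ℕ)
    (ha : ∀ i, a i ≠ 0) (haff : ∀ i, ∀ x ∈ atomE M₀ i, S x = a i * x + c i)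
    (hαa : ∀ i, ((α i : ℤ):ℝ) = a i) (hαq : ∀ i, α i = (q2 i:ℤ) - (q1 i:ℤ))
    (hq1 : ∀ i, a i * ((i:ℝ)/M₀) + c i = (q1 i:ℝ)/M₀)
    (hq2 : ∀ i, a i * (((i:ℝ)+1)/M₀) + c i = (q2 i:ℝ)/M₀)
    (havoidS : ∀ x ∈ Set.Icc (0:ℝ) 1, S x ∈ endpts M₀ → x ∈ endpts N)
    (j : Fin N) :
    {k : Fin N | Relation.EqvGen
        (fun p q => (S '' atomE N p ∩ S '' atomE N q).Nonempty) j k}.ncard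
      ≤ M₀ * ∏ i, (α i).natAbs := by
  classical
  have hN : 0 < N := by rw [hND]; positivity
  have hNR : (0:ℝ) < N := by exact_mod_cast hN
  have hMR : (0:ℝ) < M₀ := by exact_mod_cast hM
  have hDR : (0:ℝ) < D := by exact_mod_cast hD
  have hNDR : (N:ℝ) = (M₀:ℝ) * D := by exact_mod_cast hND
  have hα0 : ∀ i, α i ≠ 0 := by
    intro i h; exact ha i (by rw [← hαa i, h]; simp)
  set L : Fin M₀ → ℕ := fun i => (α i).natAbs with hLdef
  have hL1 : ∀ i, 1 ≤ L i := fun i => Int.natAbs_pos.mpr (hα0 i)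
  set Λ : ℕ := ∏ i, L i with hΛdef
  have hΛpos : 0 < Λ := Finset.prod_pos (fun i _ => hL1 i)
  have hLdvd : ∀ i, L i ∣ Λ := fun i => Finset.dvd_prod_of_mem _ (Finset.mem_univ i)
  -- coarse index of a fine atom
  set ι : Fin N → Fin M₀ :=
    fun k => ⟨(k : ℕ) / D, by
      rw [Nat.div_lt_iff_lt_mul hD, ← hND]; exact k.isLt⟩ with hιdef
  have hιval : ∀ k : Fin N, ((ι k : Fin M₀) : ℕ) = (k:ℕ)/D := fun k => rfl
  have hsub : ∀ k : Fin N, atomE N k ⊆ atomE M₀ (ι k) := by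
    intro k
    have h1 : ((k : ℕ) / D) * D ≤ (k:ℕ) := Nat.div_mul_le_self _ _
    have h2 : (k:ℕ) + 1 ≤ ((k:ℕ) / D + 1) * D :=
      (Nat.div_lt_iff_lt_mul hD).mp (Nat.lt_succ_self _)
    have h1R : (((k:ℕ) / D : ℕ) : ℝ) * D ≤ (k:ℕ) := by exact_mod_cast h1
    have h2R : ((((k:ℕ) + 1 : ℕ)):ℝ) ≤ (((((k:ℕ) / D + 1) * D : ℕ)):ℝ) := Nat.cast_le.mpr h2
    push_cast at h2R
    apply Set.Ioo_subset_Ioo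
    · rw [div_le_div_iff₀ hMR hNR, hιval k]
      rw [hNDR]; nlinarith
    · rw [div_le_div_iff₀ hNR hMR, hιval k]
      rw [hNDR]; nlinarith
  have haffk : ∀ k : Fin N, ∀ x ∈ atomE N k, S x = a (ι k) * x + c (ι k) :=
    fun k x hx => haff (ι k) x (hsub k hx)
  -- helper division lemmas
  have hdivle : ∀ x y : ℤ, ((x:ℝ)/N ≤ (y:ℝ)/N) → x ≤ y := by
    intro x y hxy
    rw [div_le_div_iff₀ hNR hNR] at hxy
    exact_mod_cast le_of_mul_le_mul_right hxy hNR
  have hdivlt : ∀ x y : ℤ, ((x:ℝ)/N < (y:ℝ)/N) → x < y := by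
    intro x y hxy
    rw [div_lt_div_iff₀ hNR hNR] at hxy
    exact_mod_cast lt_of_mul_lt_mul_right hxy hNR.le
  have hlediv : ∀ x y : ℤ, x ≤ y → ((x:ℝ)/N ≤ (y:ℝ)/N) := by
    intro x y hxy
    have h : (x:ℝ) ≤ (y:ℝ) := by exact_mod_cast hxy
    gcongr
  have hltdiv : ∀ x y : ℤ, x < y → ((x:ℝ)/N < (y:ℝ)/N) := by
    intro x y hxy
    apply div_lt_div_of_pos_right ?_ hNR
    exact_mod_cast hxy
  set γ : Fin M₀ → ℤ := fun i => (D:ℤ) * ((q1 i : ℤ) - α i * ((i:ℕ):ℤ)) with hγdef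
  have hγ : ∀ i, ((γ i : ℤ):ℝ) = N * c i := by
    intro i
    have hc : c i = (q1 i : ℝ)/M₀ - a i * (((i:ℕ):ℝ))/M₀ := by
      linear_combination hq1 i
    simp only [hγdef]
    push_cast
    rw [hc, hNDR, ← hαa i]
    field_simp
  have hck : ∀ i, c i = ((γ i : ℤ):ℝ)/N := by
    intro i; rw [hγ i]; field_simp
  set δ : Fin M₀ → ℤ := fun i => γ i + min 0 (α i) with hδdef
  set σ : Fin N → ℤ := fun k => α (ι k) * ((k:ℕ):ℤ) + δ (ι k) with hσdef
  have hatomlt : ∀ k : Fin N, ((k:ℕ):ℝ)/N < (((k:ℕ):ℝ)+1)/N := by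
    intro k; apply div_lt_div_of_pos_right ?_ hNR; linarith
  have htile : ∀ k : Fin N, S '' atomE N k
      = Set.Ioo ((σ k : ℝ)/N) (((σ k + (L (ι k) : ℤ) : ℤ):ℝ)/N) := by
    intro k
    have he : S '' atomE N k = (fun x => a (ι k) * x + c (ι k)) '' atomE N k :=
      Set.image_congr (haffk k)
    rw [he]
    unfold atomE
    rw [auxAffineIoo _ _ _ (ha (ι k)) (hatomlt k)]
    have hu : a (ι k) * (((k:ℕ):ℝ)/N) + c (ι k)
        = (((α (ι k) * ((k:ℕ):ℤ) + γ (ι k) : ℤ)):ℝ)/N := by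
      rw [hck, ← hαa]; push_cast; field_simp
    have hv : a (ι k) * ((((k:ℕ):ℝ)+1)/N) + c (ι k)
        = (((α (ι k) * (((k:ℕ):ℤ)+1) + γ (ι k) : ℤ)):ℝ)/N := by
      rw [hck, ← hαa]; push_cast; field_simp
    rw [hu, hv, min_div_div_right hNR.le, max_div_div_right hNR.le,
      ← Int.cast_min, ← Int.cast_max]
    have hexp : α (ι k) * (((k:ℕ):ℤ)+1) + γ (ι k)
        = (α (ι k) * ((k:ℕ):ℤ) + γ (ι k)) + α (ι k) := by ring
    have h1 : min (α (ι k) * ((k:ℕ):ℤ) + γ (ι k)) (α (ι k) * (((k:ℕ):ℤ)+1) + γ (ι k))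
        = σ k := by
      simp only [hσdef, hδdef]; rw [hexp]; omega
    have h2 : max (α (ι k) * ((k:ℕ):ℤ) + γ (ι k)) (α (ι k) * (((k:ℕ):ℤ)+1) + γ (ι k))
        = σ k + (L (ι k) : ℤ) := by
      simp only [hσdef, hδdef, hLdef]; rw [hexp]; omega
    rw [h1, h2]
  set gI : Fin M₀ → ℤ := fun i => min ((q1 i:ℤ) * D) ((q2 i:ℤ) * D) with hgIdef
  set hI : Fin M₀ → ℤ := fun i => max ((q1 i:ℤ) * D) ((q2 i:ℤ) * D) with hhIdef
  have hcoarselt : ∀ i : Fin M₀, ((i:ℕ):ℝ)/M₀ < (((i:ℕ):ℝ)+1)/M₀ := by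
    intro i; apply div_lt_div_of_pos_right ?_ hMR; linarith
  have hcoarse : ∀ i, S '' atomE M₀ i = Set.Ioo ((gI i:ℝ)/N) ((hI i:ℝ)/N) := by
    intro i
    rw [Set.image_congr (haff i)]
    unfold atomE
    rw [auxAffineIoo _ _ _ (ha i) (hcoarselt i), hq1 i, hq2 i]
    have e1 : ((q1 i):ℝ)/M₀ = (((q1 i:ℤ) * D : ℤ):ℝ)/N := by
      push_cast; rw [hNDR]; field_simp
    have e2 : ((q2 i):ℝ)/M₀ = (((q2 i:ℤ) * D : ℤ):ℝ)/N := by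
      push_cast; rw [hNDR]; field_simp
    rw [e1, e2, min_div_div_right hNR.le, max_div_div_right hNR.le,
      ← Int.cast_min, ← Int.cast_max]
  have hghL : ∀ i, hI i = gI i + (L i:ℤ) * D := by
    intro i
    have hq := hαq i
    simp only [hgIdef, hhIdef, hLdef]
    have hD0 : (0:ℤ) ≤ (D:ℤ) := by positivity
    rcases le_total ((q1 i:ℤ)) ((q2 i:ℤ)) with h|h
    · rw [max_eq_right (mul_le_mul_of_nonneg_right h hD0),
        min_eq_left (mul_le_mul_of_nonneg_right h hD0)]
      have hna : (((α i).natAbs : ℤ)) = (q2 i:ℤ) - q1 i := by omega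
      rw [hna]; ring
    · rw [max_eq_left (mul_le_mul_of_nonneg_right h hD0),
        min_eq_right (mul_le_mul_of_nonneg_right h hD0)]
      have hna : (((α i).natAbs : ℤ)) = (q1 i:ℤ) - q2 i := by omega
      rw [hna]; ring
  have htilene : ∀ k : Fin N, (σ k : ℝ)/N < (((σ k + (L (ι k) : ℤ) : ℤ)):ℝ)/N := by
    intro k; apply hltdiv; have := hL1 (ι k); omega
  have hginles : ∀ k : Fin N, gI (ι k) ≤ σ k ∧ σ k + (L (ι k):ℤ) ≤ hI (ι k) := by
    intro k
    have h1 : S '' atomE N k ⊆ S '' atomE M₀ (ι k) := Set.image_mono (hsub k)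
    rw [htile k, hcoarse (ι k)] at h1
    rw [Set.Ioo_subset_Ioo_iff (htilene k)] at h1
    exact ⟨hdivle _ _ h1.1, hdivle _ _ h1.2⟩
  have hresid : ∀ k : Fin N, (α (ι k)) ∣ (σ k - gI (ι k)) := by
    intro k
    have hq := hαq (ι k)
    have hD0 : (0:ℤ) ≤ (D:ℤ) := by positivity
    rcases lt_or_gt_of_ne (hα0 (ι k)) with hneg|hpos
    · refine ⟨((k:ℕ):ℤ) - ((ι k : ℕ):ℤ)*D - D + 1, ?_⟩
      simp only [hσdef, hδdef, hγdef, hgIdef]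
      rw [min_eq_right hneg.le,
        min_eq_right (mul_le_mul_of_nonneg_right (by omega) hD0)]
      rw [hq]; ring
    · refine ⟨((k:ℕ):ℤ) - ((ι k : ℕ):ℤ)*D, ?_⟩
      simp only [hσdef, hδdef, hγdef, hgIdef]
      rw [min_eq_left hpos.le,
        min_eq_left (mul_le_mul_of_nonneg_right (by omega) hD0)]
      rw [hq]; ring
  -- the family of atoms in coarse atom i tiles the coarse image
  have hcover : ∀ i : Fin M₀, ∀ b : ℤ, gI i ≤ b → b + 1 ≤ hI i →
      ∃ m : Fin N, ι m = i ∧ σ m ≤ b ∧ b + 1 ≤ σ m + (L i:ℤ) := by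
    intro i b hb1 hb2
    have hq := hαq i
    have hLZ : (0:ℤ) < (L i:ℤ) := by exact_mod_cast hL1 i
    have hD0 : (0:ℤ) ≤ (D:ℤ) := by positivity
    set e : ℤ := b - gI i with hedef
    have he0 : 0 ≤ e := by omega
    have heU : e < (L i:ℤ) * D := by have := hghL i; omega
    obtain ⟨hdl, hdu⟩ := auxDiv (L i:ℤ) e hLZ
    set t : ℤ := e / (L i:ℤ) with htdef
    have ht0 : 0 ≤ t := Int.ediv_nonneg he0 hLZ.le
    have htD : t < (D:ℤ) := by
      by_contra hcon
      push_neg at hcon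
      have : (L i:ℤ) * D ≤ (L i:ℤ) * t := by
        exact mul_le_mul_of_nonneg_left hcon hLZ.le
      omega
    have htnat : ((t.toNat : ℕ) : ℤ) = t := Int.toNat_of_nonneg ht0
    have hrD : t.toNat < D := by omega
    have hi1 : (i:ℕ) + 1 ≤ M₀ := i.isLt
    rcases lt_or_gt_of_ne (hα0 i) with hneg|hpos
    · -- negative slope : r = D - 1 - t
      have hmlt : D * (i:ℕ) + (D - 1 - t.toNat) < N := by
        have h2 : D * (i:ℕ) + D ≤ D * M₀ := by
          calc D * (i:ℕ) + D = D * ((i:ℕ)+1) := by ring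
          _ ≤ D * M₀ := Nat.mul_le_mul_left D hi1
        have hc : D * M₀ = M₀ * D := Nat.mul_comm _ _
        rw [hND]; omega
      refine ⟨⟨D * (i:ℕ) + (D - 1 - t.toNat), hmlt⟩, ?_, ?_, ?_⟩
      · apply Fin.ext
        rw [hιval]
        show (D * (i:ℕ) + (D - 1 - t.toNat))/D = (i:ℕ)
        rw [Nat.mul_add_div hD, Nat.div_eq_of_lt (by omega)]
        omega
      all_goals {
        have hιm : ι ⟨D * (i:ℕ) + (D - 1 - t.toNat), hmlt⟩ = i := by
          apply Fin.ext
          rw [hιval]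
          show (D * (i:ℕ) + (D - 1 - t.toNat))/D = (i:ℕ)
          rw [Nat.mul_add_div hD, Nat.div_eq_of_lt (by omega)]
          omega
        have hvm : (D * (i:ℕ) + (D - 1 - t.toNat))/D = (i:ℕ) := by
          rw [Nat.mul_add_div hD, Nat.div_eq_of_lt (by omega)]
          omega
        have hσm : σ ⟨D * (i:ℕ) + (D - 1 - t.toNat), hmlt⟩ = gI i + (L i:ℤ) * t := by
          simp only [hσdef, hδdef, hγdef, hgIdef]
          rw [hιm]
          have hcast : (((D * (i:ℕ) + (D - 1 - t.toNat) : ℕ)):ℤ)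
              = (D:ℤ) * ((i:ℕ):ℤ) + ((D:ℤ) - 1 - t) := by
            push_cast [Int.toNat_of_nonneg ht0]
            omega
          rw [hcast, min_eq_right hneg.le,
            min_eq_right (mul_le_mul_of_nonneg_right (by omega) hD0)]
          have hLα : (L i:ℤ) = -(α i) := by simp only [hLdef]; omega
          rw [hLα, hq]
          ring
        rw [hσm]
        omega
      }
    · -- positive slope : r = t
      have hmlt : D * (i:ℕ) + t.toNat < N := by
        have h2 : D * (i:ℕ) + D ≤ D * M₀ := by
          calc D * (i:ℕ) + D = D * ((i:ℕ)+1) := by ring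
          _ ≤ D * M₀ := Nat.mul_le_mul_left D hi1
        have hc : D * M₀ = M₀ * D := Nat.mul_comm _ _
        rw [hND]; omega
      refine ⟨⟨D * (i:ℕ) + t.toNat, hmlt⟩, ?_, ?_, ?_⟩
      · apply Fin.ext
        rw [hιval]
        show (D * (i:ℕ) + t.toNat)/D = (i:ℕ)
        rw [Nat.mul_add_div hD, Nat.div_eq_of_lt (by omega)]
        omega
      all_goals {
        have hιm : ι ⟨D * (i:ℕ) + t.toNat, hmlt⟩ = i := by
          apply Fin.ext
          rw [hιval]
          show (D * (i:ℕ) + t.toNat)/D = (i:ℕ)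
          rw [Nat.mul_add_div hD, Nat.div_eq_of_lt (by omega)]
          omega
        have hvm : (D * (i:ℕ) + t.toNat)/D = (i:ℕ) := by
          rw [Nat.mul_add_div hD, Nat.div_eq_of_lt (by omega)]
          omega
        have hσm : σ ⟨D * (i:ℕ) + t.toNat, hmlt⟩ = gI i + (L i:ℤ) * t := by
          simp only [hσdef, hδdef, hγdef, hgIdef]
          rw [hιm]
          have hcast : (((D * (i:ℕ) + t.toNat : ℕ)):ℤ)
              = (D:ℤ) * ((i:ℕ):ℤ) + t := by
            push_cast [Int.toNat_of_nonneg ht0]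
            omega
          rw [hcast, min_eq_left hpos.le,
            min_eq_left (mul_le_mul_of_nonneg_right (by omega) hD0)]
          have hLα : (L i:ℤ) = α i := by simp only [hLdef]; omega
          rw [hLα, hq]
          ring
        rw [hσm]
        omega
      }
  -- fine atoms lie in [0,1]
  have hatom01 : ∀ k : Fin N, atomE N k ⊆ Set.Icc (0:ℝ) 1 := by
    intro k x hx
    obtain ⟨hx1, hx2⟩ := hx
    have hk0 : (0:ℝ) ≤ ((k:ℕ):ℝ)/N := by positivity
    have hk1 : (((k:ℕ):ℝ)+1)/N ≤ 1 := by
      rw [div_le_one hNR]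
      have : (k:ℕ) + 1 ≤ N := k.isLt
      exact_mod_cast this
    exact ⟨le_of_lt (lt_of_le_of_lt hk0 hx1), le_of_lt (lt_of_lt_of_le hx2 hk1)⟩
  -- images of fine atoms avoid coarse endpoints
  have havoid : ∀ k : Fin N, ∀ y ∈ S '' atomE N k, y ∉ endpts M₀ := by
    rintro k y ⟨x, hx, rfl⟩ hy
    have hxe : x ∈ endpts N := havoidS x (hatom01 k hx) hy
    obtain ⟨iN, hiN, hxi⟩ := hxe
    obtain ⟨hx1, hx2⟩ := hx
    rw [hxi] at hx1 hx2
    have h1 : (k:ℕ) < iN := by exact_mod_cast hdivlt ((k:ℕ):ℤ) (iN:ℤ) (by push_cast at hx1 ⊢; exact hx1)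
    have h2 : (iN:ℤ) < (k:ℕ) + 1 := hdivlt (iN:ℤ) (((k:ℕ):ℤ)+1) (by push_cast at hx2 ⊢; exact hx2)
    omega
  -- every tile sits inside a single coarse cell
  have hcellOf : ∀ k : Fin N, ∃ P : ℕ, P < M₀ ∧
      ((D:ℤ))*P ≤ σ k ∧ σ k + (L (ι k):ℤ) ≤ (D:ℤ)*(P+1) := by
    intro k
    have h01 : S '' atomE N k ⊆ Set.Icc 0 1 := by
      rintro y ⟨x, hx, rfl⟩
      exact hSmaps (hatom01 k hx)
    rw [htile k] at h01
    have hLk := hL1 (ι k)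
    -- 0 ≤ σ k
    have hσ0 : 0 ≤ σ k := by
      by_contra hcon
      push_neg at hcon
      have hmem : ((σ k:ℝ) + 1/2)/N ∈
          Set.Ioo ((σ k:ℝ)/N) ((((σ k + (L (ι k):ℤ)) : ℤ):ℝ)/N) := by
        constructor
        · apply div_lt_div_of_pos_right (by linarith) hNR
        · apply div_lt_div_of_pos_right ?_ hNR
          have : (1:ℝ) ≤ ((L (ι k):ℕ):ℝ) := by exact_mod_cast hLk
          push_cast
          linarith
      have hge := (h01 hmem).1
      have hc1 : σ k ≤ -1 := by omega
      have hσR : (σ k:ℝ) ≤ -1 := by exact_mod_cast hc1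
      have hlt : ((σ k:ℝ) + 1/2)/N < 0 := div_neg_of_neg_of_pos (by linarith) hNR
      linarith
    have hLZk : (1:ℤ) ≤ (L (ι k):ℤ) := by exact_mod_cast hLk
    have hNZ : (N:ℤ) = (M₀:ℤ) * D := by exact_mod_cast hND
    have hD0 : (0:ℤ) ≤ (D:ℤ) := by positivity
    -- upper bound σ k + L ≤ N
    have hσN : σ k + (L (ι k):ℤ) ≤ N := by
      by_contra hcon
      push_neg at hcon
      have hmem : ((((σ k + (L (ι k):ℤ)) : ℤ):ℝ) - 1/2)/N ∈
          Set.Ioo ((σ k:ℝ)/N) ((((σ k + (L (ι k):ℤ)) : ℤ):ℝ)/N) := by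
        constructor
        · apply div_lt_div_of_pos_right ?_ hNR
          push_cast
          have : (1:ℝ) ≤ ((L (ι k):ℕ):ℝ) := by exact_mod_cast hLk
          linarith
        · apply div_lt_div_of_pos_right (by linarith) hNR
      have hle := (h01 hmem).2
      have hc1 : (N:ℤ) + 1 ≤ σ k + (L (ι k):ℤ) := by omega
      have hc1R : ((N:ℝ)) + 1 ≤ (((σ k + (L (ι k):ℤ)) : ℤ):ℝ) := by exact_mod_cast hc1
      have hgt : (1:ℝ) < ((((σ k + (L (ι k):ℤ)) : ℤ):ℝ) - 1/2)/N := by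
        rw [lt_div_iff₀ hNR]; linarith
      linarith
    set P : ℕ := (σ k).toNat / D with hPdef
    have h1 : P * D ≤ (σ k).toNat := Nat.div_mul_le_self _ _
    have h2 : (σ k).toNat < (P+1) * D := (Nat.div_lt_iff_lt_mul hD).mp (Nat.lt_succ_self _)
    have h1z : ((P:ℤ)) * D ≤ σ k := by
      have : ((P * D : ℕ):ℤ) ≤ ((σ k).toNat:ℤ) := by exact_mod_cast h1
      push_cast at this
      omega
    have h2z : σ k < ((P:ℤ)+1) * D := by
      have : ((σ k).toNat:ℤ) < (((P+1) * D : ℕ):ℤ) := by exact_mod_cast h2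
      push_cast at this
      omega
    refine ⟨P, ?_, ?_, ?_⟩
    · by_contra hcc
      push_neg at hcc
      have : ((M₀:ℤ)) * D ≤ ((P:ℤ)) * D :=
        mul_le_mul_of_nonneg_right (by exact_mod_cast hcc) hD0
      omega
    · rw [mul_comm]; exact h1z
    · by_contra hcc
      push_neg at hcc
      set w : ℤ := ((P:ℤ)+1) * D with hwdef
      have hw1 : σ k < w := h2z
      have hb : ((P:ℤ)+1)*D = (D:ℤ)*((P:ℤ)+1) := mul_comm _ _
      have hw2 : w < σ k + (L (ι k):ℤ) := by omega
      have hPM : (P:ℕ) + 1 ≤ M₀ := by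
        by_contra hpp
        push_neg at hpp
        have hMP : M₀ ≤ P := Nat.lt_succ_iff.mp hpp
        have : ((M₀:ℤ)) * D ≤ ((P:ℤ)) * D :=
          mul_le_mul_of_nonneg_right (by exact_mod_cast hMP) hD0
        omega
      have hmem : ((w:ℝ))/N ∈
          Set.Ioo ((σ k:ℝ)/N) ((((σ k + (L (ι k):ℤ)) : ℤ):ℝ)/N) := ⟨hltdiv _ _ hw1, hltdiv _ _ hw2⟩
      rw [← htile k] at hmem
      apply havoid k _ hmem
      refine ⟨P+1, hPM, ?_⟩
      show ((w:ℝ))/N = ((P+1:ℕ):ℝ)/M₀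
      rw [hwdef, hNDR]
      push_cast
      rw [div_eq_div_iff (by positivity) (by positivity)]
      ring
  have hD0z : (0:ℤ) ≤ (D:ℤ) := by positivity
  -- the class of j
  set rel : Fin N → Fin N → Prop :=
    fun p q => (S '' atomE N p ∩ S '' atomE N q).Nonempty with hreldef
  have hrelsymm : ∀ p q : Fin N, rel p q → rel q p := by
    rintro p q ⟨z, h1, h2⟩; exact ⟨z, h2, h1⟩
  set K : Set (Fin N) := {k | Relation.EqvGen rel j k} with hKdef
  have hmemK : ∀ k, k ∈ K ↔ Relation.EqvGen rel j k := fun k => Iff.rfl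
  have hjK : j ∈ K := (hmemK j).mpr (Relation.EqvGen.refl j)
  have hKfin : K.Finite := Set.toFinite K
  set TF := hKfin.toFinset with hTFdef
  have hne : TF.Nonempty := ⟨j, hKfin.mem_toFinset.mpr hjK⟩
  have hneI : ((TF.image σ)).Nonempty := hne.image σ
  set b : ℤ := (TF.image σ).min' hneI with hbdef
  obtain ⟨k₀, hk₀TF, hk₀σ⟩ := Finset.mem_image.mp ((TF.image σ).min'_mem hneI)
  have hk₀K : k₀ ∈ K := hKfin.mem_toFinset.mp hk₀TF
  have hbmin : ∀ k, k ∈ K → b ≤ σ k := by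
    intro k hk
    exact Finset.min'_le _ _ (Finset.mem_image_of_mem σ (hKfin.mem_toFinset.mpr hk))
  obtain ⟨P, hPM, hP1, hP2⟩ := hcellOf k₀
  rw [hk₀σ] at hP1 hP2
  have hLk₀ : (1:ℤ) ≤ (L (ι k₀):ℤ) := by exact_mod_cast hL1 (ι k₀)
  have hΛ1 : (1:ℤ) ≤ (Λ:ℤ) := by exact_mod_cast hΛpos
  -- alignment of all families covering the cell P
  have halign : ∀ i : Fin M₀, gI i ≤ (D:ℤ)*P → (D:ℤ)*((P:ℤ)+1) ≤ hI i →
      (α i) ∣ (b - gI i) := by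
    intro i hg hh
    have hb1 : gI i ≤ b := le_trans hg hP1
    have hb2 : b + 1 ≤ hI i := by omega
    obtain ⟨m, hιm, hm1, hm2⟩ := hcover i b hb1 hb2
    have hm2' : b + 1 ≤ σ m + (L (ι m):ℤ) := by rw [hιm]; exact hm2
    have hcm : (σ k₀:ℝ) = (b:ℝ) := by exact_mod_cast hk₀σ
    have hrelmk : rel m k₀ := by
      refine ⟨((b:ℝ) + 1/2)/N, ?_, ?_⟩
      · rw [htile m]
        constructor
        · apply div_lt_div_of_pos_right ?_ hNR
          have h : (σ m:ℝ) ≤ (b:ℝ) := by exact_mod_cast hm1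
          linarith
        · apply div_lt_div_of_pos_right ?_ hNR
          have h : (b:ℝ) + 1 ≤ ((σ m + (L (ι m):ℤ) : ℤ):ℝ) := by exact_mod_cast hm2'
          linarith
      · rw [htile k₀]
        constructor
        · apply div_lt_div_of_pos_right ?_ hNR
          rw [hcm]; linarith
        · apply div_lt_div_of_pos_right ?_ hNR
          have h : (b:ℝ) + 1 ≤ ((σ k₀ + (L (ι k₀):ℤ) : ℤ):ℝ) := by
            push_cast
            have : (1:ℝ) ≤ ((L (ι k₀):ℕ):ℝ) := by exact_mod_cast hL1 (ι k₀)
            have hcm2 : (σ k₀:ℝ) = (b:ℝ) := hcm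
            linarith
          linarith
    have hmK : m ∈ K := (hmemK m).mpr
      (Relation.EqvGen.trans j k₀ m ((hmemK k₀).mp hk₀K)
        (Relation.EqvGen.symm m k₀ (Relation.EqvGen.rel m k₀ hrelmk)))
    have hσmb : σ m = b := le_antisymm hm1 (hbmin m hmK)
    have hd := hresid m
    rw [hιm, hσmb] at hd
    exact hd
  -- the invariant
  set Q : Fin N → Prop := fun k =>
    ((D:ℤ)*P ≤ σ k ∧ σ k + (L (ι k):ℤ) ≤ (D:ℤ)*((P:ℤ)+1)) ∧ b ≤ σ k ∧
      σ k + (L (ι k):ℤ) ≤ b + (Λ:ℤ) ∧ (α (ι k)) ∣ (σ k - b) with hQdef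
  have hstep : ∀ x y : Fin N, rel x y → Q x → Q y := by
    rintro x y ⟨z, hzx, hzy⟩ hQx
    obtain ⟨⟨hx1, hx2⟩, hx3, hx4, hx5⟩ := hQx
    rw [htile x] at hzx
    rw [htile y] at hzy
    have hov1 : σ y < σ x + (L (ι x):ℤ) := hdivlt _ _ (lt_trans hzy.1 hzx.2)
    have hov2 : σ x < σ y + (L (ι y):ℤ) := hdivlt _ _ (lt_trans hzx.1 hzy.2)
    obtain ⟨P', hP'M, hy1, hy2⟩ := hcellOf y
    have hLy : (1:ℤ) ≤ (L (ι y):ℤ) := by exact_mod_cast hL1 (ι y)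
    have hPP1 : ((P':ℤ)) < (P:ℤ)+1 := by
      have h1 : (D:ℤ)*P' < (D:ℤ)*((P:ℤ)+1) := by omega
      exact lt_of_mul_lt_mul_left h1 hD0z
    have hPP2 : ((P:ℤ)) < (P':ℤ)+1 := by
      have h1 : (D:ℤ)*P < (D:ℤ)*((P':ℤ)+1) := by omega
      exact lt_of_mul_lt_mul_left h1 hD0z
    have hPP : P' = P := by omega
    rw [hPP] at hy1 hy2
    obtain ⟨hgy, hhy⟩ := hginles y
    have hgu : ∃ u : ℤ, gI (ι y) = u * (D:ℤ) := by
      simp only [hgIdef]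
      rcases le_total ((q1 (ι y):ℤ)*D) ((q2 (ι y):ℤ)*D) with h|h
      · exact ⟨q1 (ι y), min_eq_left h⟩
      · exact ⟨q2 (ι y), min_eq_right h⟩
    have hhu : ∃ v : ℤ, hI (ι y) = v * (D:ℤ) := by
      simp only [hhIdef]
      rcases le_total ((q1 (ι y):ℤ)*D) ((q2 (ι y):ℤ)*D) with h|h
      · exact ⟨q2 (ι y), max_eq_right h⟩
      · exact ⟨q1 (ι y), max_eq_left h⟩
    obtain ⟨u, hu⟩ := hgu
    obtain ⟨v, hv⟩ := hhu
    have hb4 : (D:ℤ)*((P:ℤ)+1) = ((P:ℤ)+1)*D := mul_comm _ _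
    have hb5 : (D:ℤ)*(P:ℤ) = (P:ℤ)*D := mul_comm _ _
    have hgP : gI (ι y) ≤ (D:ℤ)*P := by
      by_contra hcc
      push_neg at hcc
      have h1 : (P:ℤ) < u := lt_of_mul_lt_mul_right (by omega) hD0z
      have h3 : ((P:ℤ)+1)*D ≤ u*D :=
        mul_le_mul_of_nonneg_right (by omega) hD0z
      omega
    have hhP : (D:ℤ)*((P:ℤ)+1) ≤ hI (ι y) := by
      by_contra hcc
      push_neg at hcc
      have h1 : v < (P:ℤ)+1 := lt_of_mul_lt_mul_right (by omega) hD0z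
      have h3 : v*D ≤ (P:ℤ)*D :=
        mul_le_mul_of_nonneg_right (by omega) hD0z
      omega
    have hdvdb := halign (ι y) hgP hhP
    have hdy := hresid y
    have hdvd2 : (α (ι y)) ∣ (σ y - b) := by
      have hrr : σ y - b = (σ y - gI (ι y)) - (b - gI (ι y)) := by ring
      rw [hrr]; exact dvd_sub hdy hdvdb
    have hdvdL : ((L (ι y):ℤ)) ∣ (σ y - b) := by
      simp only [hLdef]
      exact (Int.natAbs_dvd).mpr hdvd2
    obtain ⟨w, hw⟩ := hdvdL
    have hwpos : 0 ≤ w := by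
      by_contra hcc
      push_neg at hcc
      have h3 : (L (ι y):ℤ)*w ≤ (L (ι y):ℤ)*(-1) :=
        mul_le_mul_of_nonneg_left (by omega) (by linarith)
      have h4 : (L (ι y):ℤ)*(-1) = -(L (ι y):ℤ) := by ring
      omega
    obtain ⟨Λ', hΛ'⟩ := hLdvd (ι y)
    have hΛ'z : (Λ:ℤ) = (L (ι y):ℤ) * (Λ':ℤ) := by exact_mod_cast hΛ'
    have hup : (L (ι y):ℤ)*w + (L (ι y):ℤ) ≤ (Λ:ℤ) := by
      have h2 : (L (ι y):ℤ)*w < (L (ι y):ℤ)*Λ' := by omega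
      have h3 : w < Λ' := lt_of_mul_lt_mul_left h2 (by linarith)
      have h5 : (L (ι y):ℤ)*(w+1) ≤ (L (ι y):ℤ)*Λ' :=
        mul_le_mul_of_nonneg_left (by omega) (by linarith)
      have h6 : (L (ι y):ℤ)*(w+1) = (L (ι y):ℤ)*w + L (ι y) := by ring
      omega
    have hLw0 : 0 ≤ (L (ι y):ℤ)*w := mul_nonneg (by linarith) hwpos
    exact ⟨⟨hy1, hy2⟩, by omega, by omega, hdvd2⟩
  have hQk₀ : Q k₀ := by
    have hLΛ : (L (ι k₀):ℤ) ≤ (Λ:ℤ) := by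
      exact_mod_cast Nat.le_of_dvd hΛpos (hLdvd (ι k₀))
    refine ⟨⟨by omega, by omega⟩, by omega, by omega, ?_⟩
    rw [hk₀σ]
    simp [← hbdef]
  have hQall : ∀ k, k ∈ K → Q k := by
    intro k hk
    have h1 : Relation.EqvGen rel k₀ k :=
      Relation.EqvGen.trans k₀ j k
        (Relation.EqvGen.symm j k₀ ((hmemK k₀).mp hk₀K)) ((hmemK k).mp hk)
    exact (auxEqvGenIff
      (fun x y hxy => ⟨hstep x y hxy, hstep y x (hrelsymm x y hxy)⟩) h1).mp hQk₀
  -- counting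
  have hcount : TF.card ≤ (Finset.univ ×ˢ Finset.range Λ : Finset (Fin M₀ × ℕ)).card := by
    apply Finset.card_le_card_of_injOn (fun k => (ι k, (σ k - b).toNat))
    · intro k hkTF
      have hk : k ∈ K := hKfin.mem_toFinset.mp hkTF
      obtain ⟨⟨_, _⟩, hk3, hk4, _⟩ := hQall k hk
      have hLky : (1:ℤ) ≤ (L (ι k):ℤ) := by exact_mod_cast hL1 (ι k)
      simp only [Finset.mem_coe, Finset.mem_product, Finset.mem_univ, Finset.mem_range, true_and]
      omega
    · intro k hkTF k' hk'TF heq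
      have hk : k ∈ K := hKfin.mem_toFinset.mp (Finset.mem_coe.mp hkTF)
      have hk' : k' ∈ K := hKfin.mem_toFinset.mp (Finset.mem_coe.mp hk'TF)
      have hι : ι k = ι k' := congrArg Prod.fst heq
      have hτ : (σ k - b).toNat = (σ k' - b).toNat := congrArg Prod.snd heq
      have hb1 := (hQall k hk).2.1
      have hb2 := (hQall k' hk').2.1
      have hσeq : σ k = σ k' := by omega
      have e1 : σ k = α (ι k) * ((k:ℕ):ℤ) + δ (ι k) := rfl
      have e2 : σ k' = α (ι k') * ((k':ℕ):ℤ) + δ (ι k') := rfl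
      rw [hι] at e1
      have hmul : α (ι k') * ((k:ℕ):ℤ) = α (ι k') * ((k':ℕ):ℤ) := by omega
      have hkk : ((k:ℕ):ℤ) = ((k':ℕ):ℤ) := mul_left_cancel₀ (hα0 (ι k')) hmul
      exact Fin.ext (by exact_mod_cast hkk)
  have hcard : (Finset.univ ×ˢ Finset.range Λ : Finset (Fin M₀ × ℕ)).card = M₀ * Λ := by
    rw [Finset.card_product, Finset.card_univ, Fintype.card_fin, Finset.card_range]
  have hfinal : K.ncard = TF.card := by
    rw [hTFdef, Set.ncard_eq_toFinset_card K hKfin]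
  calc K.ncard = TF.card := hfinal
    _ ≤ (Finset.univ ×ˢ Finset.range Λ : Finset (Fin M₀ × ℕ)).card := hcount
    _ = M₀ * Λ := hcard

/-- for `S` preserving Lebesgue measure with an admissible sequence of
partitions, the equivalence classes of the relation generated by
`j ≈ k ↔ S(E_j) ∩ S(E_k) ≠ ∅` have size uniformly bounded in `n`. -/
theorem stmt_8 (S : ℝ → ℝ) (hSmaps : Set.MapsTo S (Set.Icc 0 1) (Set.Icc 0 1))
    (hpres : PreservesLeb S) (Mseq : ℕ → ℕ) (hadm : AdmissibleSeq S Mseq) :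
    ∃ C : ℕ, 0 < C ∧ ∀ n : ℕ, 1 ≤ n → ∀ j : Fin (Mseq n),
      {k : Fin (Mseq n) |
        Relation.EqvGen
          (fun p q => (S '' atomE (Mseq n) p ∩ S '' atomE (Mseq n) q).Nonempty)
          j k}.ncard ≤ C := by
  classical
  obtain ⟨hpos, hdvd, hadapt, hpre⟩ := hadm
  have hM : 0 < Mseq 0 := hpos 0
  have hMR : (0:ℝ) < Mseq 0 := by exact_mod_cast hM
  choose a c ha haff he1 he2 using hadapt 0
  simp only [endpts, Set.mem_setOf_eq] at he1 he2
  choose q1 hq1le hq1 using he1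
  choose q2 hq2le hq2 using he2
  set α : Fin (Mseq 0) → ℤ := fun i => (q2 i : ℤ) - q1 i with hαdef
  have hαa : ∀ i, ((α i : ℤ) : ℝ) = a i := by
    intro i
    have key : a i / (Mseq 0 : ℝ) = ((q2 i:ℝ) - (q1 i:ℝ))/(Mseq 0:ℝ) := by
      linear_combination hq2 i - hq1 i
    have key2 : a i = (q2 i:ℝ) - (q1 i:ℝ) := by
      field_simp at key; linarith
    simp only [hαdef]
    push_cast
    linarith
  refine ⟨Mseq 0 * ∏ i, (α i).natAbs, ?_, ?_⟩
  · have hpos' : ∀ i, 0 < (α i).natAbs := by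
      intro i
      apply Int.natAbs_pos.mpr
      intro h
      exact ha i (by rw [← hαa i, h]; simp)
    exact Nat.mul_pos hM (Finset.prod_pos (fun i _ => hpos' i))
  · intro n hn j
    have hMdvd : ∀ m, Mseq 0 ∣ Mseq m := by
      intro m
      induction m with
      | zero => exact dvd_rfl
      | succ k ih => exact ih.trans (hdvd k)
    obtain ⟨D, hND⟩ := hMdvd n
    have hD : 0 < D := by
      rcases Nat.eq_zero_or_pos D with h|h
      · rw [h, Nat.mul_zero] at hND
        have := hpos n
        omega
      · exact h
    have havoidS : ∀ x ∈ Set.Icc (0:ℝ) 1, S x ∈ endpts (Mseq 0) →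
        x ∈ endpts (Mseq n) := by
      intro x hx hSx
      apply hpre n 1 le_rfl hn
      refine ⟨?_, hx⟩
      simpa [Function.iterate_one] using hSx
    exact auxMain S hSmaps (Mseq 0) (Mseq n) D hM hD hND a c α q1 q2 ha haff hαa
      (fun i => rfl) hq1 hq2 havoidS j
end
end

section
/- Let S : [0,1] → [0,1] preserve μ and let (M_n) be an admissible sequence of partitions for S. Suppose all slopes of S on the atoms of the M_0-equal partition have the same absolute value s, i.e. |a_j| = s for all j = 1,…,M_0. Then for every n ≥ 1, the Markov matrix B_n of S for the M_n-equal partition is unistochastic: there exists an M_n×M_n complex unitary matrix U with |U_{jk}|² = (B_n)_{jk} for all j, k. -/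
section CombAux
open Finset

lemma Nlem (M s : ℕ) (hs : 0 < s) (p : Fin M → ℕ) (hp : ∀ j, p j + s ≤ M)
    (hcov : ∀ k, k < M → ((univ.filter (fun j => p j ≤ k ∧ k < p j + s)).card = s)) :
    ∀ k, k < M → (univ.filter (fun j => p j = k)).card = if s ∣ k then s else 0 := by
  intro k
  induction k using Nat.strong_induction_on with
  | _ k IH =>
  intro hkM
  have hfib : (univ.filter (fun j => p j ≤ k ∧ k < p j + s)).card
      = ∑ k' ∈ (range (k+1)).filter (fun k' => k' ≤ k ∧ k < k' + s),
          (univ.filter (fun j => p j = k')).card := by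
    rw [Finset.card_eq_sum_card_fiberwise (f := p)
      (t := (range (k+1)).filter (fun k' => k' ≤ k ∧ k < k' + s))
      (by intro j hj; simp only [mem_coe, mem_filter, mem_univ, true_and] at hj ⊢
          exact ⟨mem_range.mpr (Nat.lt_succ_of_le hj.1), hj⟩)]
    apply Finset.sum_congr rfl
    intro k' hk'
    simp only [mem_filter, mem_range] at hk'
    congr 1
    ext j
    simp only [mem_filter, mem_univ, true_and]
    constructor
    · rintro ⟨_, h⟩; exact h
    · rintro rfl; exact ⟨hk'.2, rfl⟩
  have hsum : ∑ k' ∈ (range (k+1)).filter (fun k' => k' ≤ k ∧ k < k' + s),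
      (univ.filter (fun j => p j = k')).card = s := by
    rw [← hfib]; exact hcov k hkM
  by_cases hdvd : s ∣ k
  · rw [if_pos hdvd, ← hsum]
    rw [Finset.sum_eq_single_of_mem k]
    · simp only [mem_filter, mem_range]
      exact ⟨Nat.lt_succ_self k, le_refl k, Nat.lt_add_of_pos_right hs⟩
    · intro k' hk' hne
      simp only [mem_filter, mem_range] at hk'
      have hk'lt : k' < k := lt_of_le_of_ne hk'.2.1 hne
      rw [IH k' hk'lt (lt_trans hk'lt hkM)]
      rw [if_neg]
      rintro ⟨q', rfl⟩
      obtain ⟨q, rfl⟩ := hdvd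
      have h1 : q' < q := by
        by_contra h
        exact absurd (Nat.mul_le_mul_left s (le_of_not_gt h)) (not_le.mpr hk'lt)
      have : s * q' + s ≤ s * q := by
        calc s * q' + s = s * (q' + 1) := by ring
        _ ≤ s * q := Nat.mul_le_mul_left s h1
      omega
  · rw [if_neg hdvd]
    have hdm : s * (k / s) + k % s = k := Nat.div_add_mod k s
    have hmlt : k % s < s := Nat.mod_lt _ hs
    have hmodpos : 0 < k % s := Nat.pos_of_ne_zero (fun h => hdvd (Nat.dvd_of_mod_eq_zero h))
    set k0 := s * (k / s) with hk0
    have hk0lt : k0 < k := by omega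
    have hsub : ({k0, k} : Finset ℕ) ⊆ (range (k+1)).filter (fun k' => k' ≤ k ∧ k < k' + s) := by
      intro x hx
      simp only [mem_insert, mem_singleton] at hx
      rcases hx with rfl | rfl
      · simp only [mem_filter, mem_range]; omega
      · simp only [mem_filter, mem_range]; omega
    have hz : ∀ x ∈ (range (k+1)).filter (fun k' => k' ≤ k ∧ k < k' + s),
        x ∉ ({k0, k} : Finset ℕ) → (univ.filter (fun j => p j = x)).card = 0 := by
      intro x hx hxn
      simp only [mem_filter, mem_range] at hx
      simp only [mem_insert, mem_singleton, not_or] at hxn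
      have hxlt : x < k := lt_of_le_of_ne hx.2.1 hxn.2
      rw [IH x hxlt (lt_trans hxlt hkM), if_neg]
      rintro ⟨q', rfl⟩
      have hc : s * q' = q' * s := Nat.mul_comm s q'
      have h1 : q' ≤ k / s := (Nat.le_div_iff_mul_le hs).mpr (by omega)
      have h2 : ¬ (q' = k / s) := fun h => hxn.1 (by rw [hk0, h])
      have h3 : q' + 1 ≤ k / s := by omega
      have h4 : s * (q' + 1) ≤ s * (k / s) := Nat.mul_le_mul_left s h3
      have h5 : s * (q' + 1) = s * q' + s := by ring
      omega
    have heq := Finset.sum_subset hsub hz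
    rw [← heq] at hsum
    rw [Finset.sum_insert (by simp only [mem_singleton]; omega), Finset.sum_singleton] at hsum
    have hNk0 : (univ.filter (fun j => p j = k0)).card = s := by
      have := IH k0 hk0lt (lt_trans hk0lt hkM)
      rwa [if_pos ⟨k/s, rfl⟩] at this
    omega

lemma root_sum (s : ℕ) (hs : 0 < s) (d d' : ℕ) (hd : d < s) (hd' : d' < s) :
    ∑ m : Fin s, ((starRingEnd ℂ) ((Complex.exp (2 * Real.pi * Complex.I / s)) ^ (m.val * d)))
        * (Complex.exp (2 * Real.pi * Complex.I / s)) ^ (m.val * d')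
      = if d = d' then (s : ℂ) else 0 := by
  set ζ : ℂ := Complex.exp (2 * Real.pi * Complex.I / s) with hζ
  have hprim : IsPrimitiveRoot ζ s := Complex.isPrimitiveRoot_exp s hs.ne'
  have hζne : ζ ≠ 0 := Complex.exp_ne_zero _
  have habs : ‖ζ‖ = 1 := by
    have : ζ = Complex.exp ((((2 * Real.pi / s : ℝ)) : ℂ) * Complex.I) := by
      rw [hζ]; congr 1; push_cast; ring
    rw [this, Complex.norm_exp_ofReal_mul_I]
  have hconj : (starRingEnd ℂ) ζ = ζ⁻¹ := by
    rw [← Complex.norm_mul_exp_arg_mul_I ζ, habs]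
    simp only [Complex.ofReal_one, one_mul]
    rw [← Complex.exp_conj, ← Complex.exp_neg]
    congr 1
    simp [Complex.conj_ofReal]
  have hterm : ∀ m : ℕ, ((starRingEnd ℂ) (ζ ^ (m * d))) * ζ ^ (m * d')
      = (ζ ^ ((d' : ℤ) - (d : ℤ))) ^ m := by
    intro m
    rw [map_pow, hconj]
    rw [← zpow_natCast (ζ⁻¹) (m * d), ← zpow_natCast ζ (m * d'), inv_zpow, ← zpow_neg]
    rw [← zpow_add₀ hζne, ← zpow_natCast (ζ ^ ((d' : ℤ) - (d : ℤ))) m, ← zpow_mul]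
    congr 1
    push_cast
    ring
  simp only [hterm]
  rw [Fin.sum_univ_eq_sum_range]
  by_cases hdd : d = d'
  · subst hdd
    simp
  · rw [if_neg hdd]
    have hx1 : ζ ^ ((d' : ℤ) - (d : ℤ)) ≠ 1 := by
      rw [Ne, hprim.zpow_eq_one_iff_dvd]
      intro hdvd
      have h0 : ((d' : ℤ) - (d : ℤ)) = 0 := by
        refine Int.eq_zero_of_abs_lt_dvd hdvd ?_
        rw [abs_lt]
        constructor <;> [skip; skip] <;> push_cast <;> omega
      have : (d' : ℤ) = d := by omega
      exact hdd (by exact_mod_cast this.symm)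
    rw [geom_sum_eq hx1]
    have hxs : (ζ ^ ((d' : ℤ) - (d : ℤ))) ^ s = 1 := by
      rw [← zpow_natCast (ζ ^ ((d' : ℤ) - (d : ℤ))) s, ← zpow_mul, mul_comm, zpow_mul]
      rw [zpow_natCast, hprim.pow_eq_one, one_zpow]
    rw [hxs, sub_self, zero_div]

lemma unistochastic_of_flat (M snat : ℕ) (hM : 0 < M) (hs : 0 < snat)
    (B : Fin M → Fin M → ℝ) (p : Fin M → ℕ) (hp : ∀ j, p j + snat ≤ M)
    (hB : ∀ j k, B j k = if p j ≤ k.val ∧ k.val < p j + snat then ((snat : ℝ))⁻¹ else 0)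
    (hN : ∀ k, k < M → (univ.filter (fun j => p j = k)).card = if snat ∣ k then snat else 0) :
    ∃ U : Matrix (Fin M) (Fin M) ℂ, U ∈ Matrix.unitaryGroup (Fin M) ℂ ∧
      ∀ j k, ‖U j k‖ ^ 2 = B j k := by
  -- every p j is divisible by snat
  have hdvd : ∀ j, snat ∣ p j := by
    intro j
    have hlt : p j < M := lt_of_lt_of_le (Nat.lt_add_of_pos_right hs) (hp j)
    by_contra hnd
    have h0 := hN (p j) hlt
    rw [if_neg hnd] at h0
    have : j ∈ univ.filter (fun j' => p j' = p j) := by simp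
    have := Finset.card_pos.mpr ⟨j, this⟩
    omega
  set q := M / snat with hq
  -- g : Fin M → Fin q
  have hglt : ∀ j : Fin M, p j / snat < q := by
    intro j
    obtain ⟨t, ht⟩ := hdvd j
    have hpj := hp j
    rw [ht, Nat.mul_div_cancel_left t hs]
    have h1 : (t + 1) * snat ≤ M := by
      have hc1 : snat * (t+1) = snat * t + snat := by ring
      have hc2 : snat * (t+1) = (t+1) * snat := Nat.mul_comm _ _
      omega
    have := (Nat.le_div_iff_mul_le hs).mpr h1
    omega
  set g : Fin M → Fin q := fun j => ⟨p j / snat, hglt j⟩ with hg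
  -- fiber cardinalities
  have hcard : ∀ t : Fin q, Fintype.card {j // g j = t} = snat := by
    intro t
    have h1 : ∀ j : Fin M, g j = t ↔ p j = snat * t.val := by
      intro j
      obtain ⟨u, hu⟩ := hdvd j
      constructor
      · intro h
        have : p j / snat = t.val := congrArg Fin.val h
        rw [hu, Nat.mul_div_cancel_left u hs] at this
        rw [hu, this]
      · intro h
        apply Fin.ext
        show p j / snat = t.val
        rw [h, Nat.mul_div_cancel_left _ hs]
    have h2 : (snat * t.val) < M := by
      have ht : t.val + 1 ≤ q := t.2
      have h3 : (t.val + 1) * snat ≤ q * snat := Nat.mul_le_mul_right snat ht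
      have h4 : q * snat ≤ M := by
        rw [hq, mul_comm]
        exact Nat.mul_div_le M snat
      have hc1 : snat * (t.val + 1) = snat * t.val + snat := by ring
      have hc2 : snat * (t.val + 1) = (t.val + 1) * snat := Nat.mul_comm _ _
      omega
    rw [Fintype.card_subtype]
    have := hN (snat * t.val) h2
    rw [if_pos ⟨t.val, rfl⟩] at this
    rw [← this]
    congr 1
    ext j
    simp [h1 j]
  -- the equivalence
  set χ : ∀ t : Fin q, {j // g j = t} ≃ Fin snat := fun t => Fintype.equivFinOfCardEq (hcard t) with hχ
  set e : Fin M ≃ Fin q × Fin snat :=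
    ((Equiv.sigmaFiberEquiv g).symm).trans
      ((Equiv.sigmaCongrRight χ).trans (Equiv.sigmaEquivProd (Fin q) (Fin snat))) with he
  have hfst : ∀ j, (e j).1 = g j := fun j => rfl
  have hMqs : M = q * snat := by
    have h1 : Fintype.card (Fin M) = Fintype.card (Fin q × Fin snat) := Fintype.card_congr e
    simpa using h1
  -- the unitary
  set ζ : ℂ := Complex.exp (2 * Real.pi * Complex.I / snat) with hζ
  set cc : ℂ := (((Real.sqrt snat)⁻¹ : ℝ) : ℂ) with hcc
  set U : Matrix (Fin M) (Fin M) ℂ :=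
    fun j k => if (g j).val = k.val / snat then cc * ζ ^ ((e j).2.val * (k.val % snat)) else 0
    with hU
  have habs : ‖ζ‖ = 1 := by
    have h : ζ = Complex.exp ((((2 * Real.pi / snat : ℝ)) : ℂ) * Complex.I) := by
      rw [hζ]; congr 1; push_cast; ring
    rw [h, Complex.norm_exp_ofReal_mul_I]
  have hcc2 : (cc * (starRingEnd ℂ) cc) = ((snat : ℝ)⁻¹ : ℝ) := by
    rw [hcc, Complex.conj_ofReal, ← Complex.ofReal_mul]
    congr 1
    rw [← Real.sqrt_inv]
    exact Real.mul_self_sqrt (by positivity)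
  -- key: the divisibility characterization of the support
  have hsupp : ∀ (j : Fin M) (k : Fin M),
      ((g j).val = k.val / snat) ↔ (p j ≤ k.val ∧ k.val < p j + snat) := by
    intro j k
    obtain ⟨t, ht⟩ := hdvd j
    have hgj : (g j).val = t := by
      show p j / snat = t
      rw [ht, Nat.mul_div_cancel_left _ hs]
    have hdm : snat * (k.val / snat) + k.val % snat = k.val := Nat.div_add_mod _ _
    have hmlt : k.val % snat < snat := Nat.mod_lt _ hs
    rw [hgj, ht]
    constructor
    · intro h
      rw [← h] at hdm
      omega
    · rintro ⟨h1, h2⟩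
      have : k.val / snat = t := by
        have h3 : snat * t ≤ k.val := h1
        have h4 : k.val < snat * t + snat := by omega
        -- uniqueness of division
        have h5 : k.val / snat = t := by
          apply Nat.div_eq_of_lt_le
          · rw [mul_comm]; exact h3
          · have hts : (t+1) * snat = snat * t + snat := by ring
            omega
        exact h5
      omega
  refine ⟨U, ?_, ?_⟩
  · -- unitarity
    rw [Matrix.mem_unitaryGroup_iff']
    ext k k'
    rw [Matrix.star_eq_conjTranspose, Matrix.mul_apply]
    simp only [Matrix.conjTranspose_apply]
    -- reindex sum by e.symm
    rw [← Equiv.sum_comp e.symm (fun j => star (U j k) * U j k')]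
    rw [Fintype.sum_prod_type]
    have hges : ∀ (t : Fin q) (m : Fin snat), g (e.symm (t, m)) = t := by
      intro t m
      have := hfst (e.symm (t, m))
      rw [Equiv.apply_symm_apply] at this
      exact this.symm
    have hres : ∀ (t : Fin q) (m : Fin snat), (e (e.symm (t, m))).2 = m := by
      intro t m; rw [Equiv.apply_symm_apply]
    have hkq : k.val / snat < q := by
      apply Nat.div_lt_of_lt_mul
      rw [mul_comm, ← hMqs]
      exact k.2
    have hkq' : k'.val / snat < q := by
      apply Nat.div_lt_of_lt_mul
      rw [mul_comm, ← hMqs]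
      exact k'.2
    by_cases hsame : k.val / snat = k'.val / snat
    · -- single t₀ contributes
      set t₀ : Fin q := ⟨k.val / snat, hkq⟩ with ht₀
      rw [Finset.sum_eq_single_of_mem t₀ (Finset.mem_univ _)]
      · -- inner sum over m
        have hsimp : ∀ m : Fin snat,
            star (U (e.symm (t₀, m)) k) * U (e.symm (t₀, m)) k'
            = (cc * (starRingEnd ℂ) cc) *
              ((starRingEnd ℂ) (ζ ^ (m.val * (k.val % snat))) * ζ ^ (m.val * (k'.val % snat))) := by
          intro m
          simp only [hU]
          rw [if_pos (congrArg Fin.val (hges t₀ m)),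
            if_pos ((congrArg Fin.val (hges t₀ m)).trans hsame)]
          rw [hres]
          simp only [star_mul', Complex.star_def, map_pow]
          ring
        rw [Finset.sum_congr rfl (fun m _ => hsimp m)]
        rw [← Finset.mul_sum]
        rw [root_sum snat hs _ _ (Nat.mod_lt _ hs) (Nat.mod_lt _ hs)]
        by_cases hkk : k = k'
        · subst hkk
          rw [if_pos rfl, hcc2, Matrix.one_apply_eq]
          push_cast
          rw [inv_mul_cancel₀]
          exact_mod_cast Nat.cast_ne_zero.mpr hs.ne'
        · have hmodne : ¬ (k.val % snat = k'.val % snat) := by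
            intro hmod
            apply hkk
            apply Fin.ext
            have hdm := Nat.div_add_mod k.val snat
            have hdm' := Nat.div_add_mod k'.val snat
            rw [hsame] at hdm
            omega
          rw [if_neg hmodne, mul_zero, Matrix.one_apply_ne hkk]
      · intro t _ htne
        apply Finset.sum_eq_zero
        intro m _
        simp only [hU]
        rw [if_neg]
        · simp
        · intro hcontra
          exact htne (Fin.ext ((congrArg Fin.val (hges t m)).symm.trans hcontra))
    · -- all terms vanish
      rw [Matrix.one_apply_ne (by rintro rfl; exact hsame rfl)]
      apply Finset.sum_eq_zero
      intro t _
      apply Finset.sum_eq_zero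
      intro m _
      simp only [hU]
      by_cases h1 : p (e.symm (t, m)) / snat = k.val / snat
      · rw [if_neg (show ¬ (p (e.symm (t, m)) / snat = k'.val / snat) from
          fun hc => hsame (h1.symm.trans hc))]
        simp
      · rw [if_neg h1]
        simp
  · -- moduli
    intro j k
    rw [hB]
    by_cases hcond : (g j).val = k.val / snat
    · rw [if_pos ((hsupp j k).mp hcond)]
      simp only [hU]
      rw [if_pos hcond]
      rw [norm_mul, norm_pow, habs, one_pow, mul_one]
      rw [hcc, Complex.norm_real, Real.norm_of_nonneg (by positivity)]
      rw [← Real.sqrt_inv]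
      exact Real.sq_sqrt (by positivity)
    · rw [if_neg (fun h => hcond ((hsupp j k).mpr h))]
      simp only [hU]
      rw [if_neg hcond]
      simp

end CombAux



open MeasureTheory Set Filter Matrix

noncomputable section

section MeasAux
lemma affine_preimage_Ioo (a c u v : ℝ) (ha : a ≠ 0) :
    (fun x => a * x + c) ⁻¹' Set.Ioo u v =
      if 0 < a then Set.Ioo ((u - c)/a) ((v - c)/a) else Set.Ioo ((v - c)/a) ((u - c)/a) := by
  rcases lt_or_gt_of_ne ha with hneg | hpos
  · rw [if_neg (not_lt.mpr hneg.le)]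
    ext x
    simp only [Set.mem_preimage, Set.mem_Ioo]
    constructor
    · rintro ⟨h1, h2⟩
      exact ⟨by rw [div_lt_iff_of_neg hneg]; linarith, by rw [lt_div_iff_of_neg hneg]; linarith⟩
    · rintro ⟨h1, h2⟩
      rw [div_lt_iff_of_neg hneg] at h1
      rw [lt_div_iff_of_neg hneg] at h2
      constructor <;> linarith
  · rw [if_pos hpos]
    ext x
    simp only [Set.mem_preimage, Set.mem_Ioo]
    constructor
    · rintro ⟨h1, h2⟩
      exact ⟨by rw [div_lt_iff₀ hpos]; linarith, by rw [lt_div_iff₀ hpos]; linarith⟩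
    · rintro ⟨h1, h2⟩
      rw [div_lt_iff₀ hpos] at h1
      rw [lt_div_iff₀ hpos] at h2
      constructor <;> linarith

lemma atom_inter_vol (S : ℝ → ℝ) (M : ℕ) (hM : 0 < M) (j : Fin M) (a c : ℝ) (ha : a ≠ 0)
    (hlin : ∀ x ∈ atomE M j, S x = a * x + c)
    (i i' : ℕ)
    (h1 : a * ((j : ℝ)/M) + c = (i : ℝ)/M) (h2 : a * (((j : ℝ)+1)/M) + c = (i' : ℝ)/M) :
    ((a : ℝ) = (i' : ℝ) - (i : ℝ)) ∧ ∀ k : Fin M,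
      volume (atomE M j ∩ S ⁻¹' atomE M k)
        = if min i i' ≤ k.val ∧ k.val < max i i' then ENNReal.ofReal (1/(|a| * M)) else 0 := by
  have hM0 : (M : ℝ) ≠ 0 := Nat.cast_ne_zero.mpr hM.ne'
  have hMpos : (0 : ℝ) < M := Nat.cast_pos.mpr hM
  have haeq : (a : ℝ) = (i' : ℝ) - (i : ℝ) := by
    have h3 : a * (((j:ℝ)+1)/M) - a * ((j:ℝ)/M) = (i':ℝ)/M - (i:ℝ)/M := by linarith
    field_simp at h3
    linarith
  refine ⟨haeq, fun k => ?_⟩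
  have hset : atomE M j ∩ S ⁻¹' atomE M k = atomE M j ∩ (fun x => a * x + c) ⁻¹' atomE M k := by
    ext x
    simp only [Set.mem_inter_iff, Set.mem_preimage]
    constructor
    · rintro ⟨hx, hSx⟩; exact ⟨hx, by rwa [← hlin x hx]⟩
    · rintro ⟨hx, hSx⟩; exact ⟨hx, by rwa [hlin x hx]⟩
  rw [hset]
  have hc : c = (i : ℝ)/M - a * ((j:ℝ)/M) := by linarith
  simp only [atomE]
  rw [affine_preimage_Ioo _ _ _ _ ha]
  rcases lt_or_gt_of_ne ha with hneg | hpos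
  · -- a < 0
    have hii : (i' : ℝ) < i := by rw [haeq] at hneg; linarith
    have hii' : i' < i := Nat.cast_lt.mp hii
    set D : ℝ := -(a * M) with hD
    have hDpos : 0 < D := by rw [hD]; nlinarith
    have hD0 : D ≠ 0 := hDpos.ne'
    rw [if_neg (not_lt.mpr hneg.le)]
    have key : ∀ X Y : ℝ, X ≤ Y → (j:ℝ)/M + X/D ≤ (j:ℝ)/M + Y/D := by
      intro X Y h
      have h9 : X / D ≤ Y / D := by gcongr
      linarith
    have e1 : (((k:ℝ)+1)/M - c)/a = (j:ℝ)/M + ((i:ℝ) - (k:ℝ) - 1)/D := by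
      rw [hc, hD]; field_simp; ring
    have e2 : (((k:ℝ))/M - c)/a = (j:ℝ)/M + ((i:ℝ) - (k:ℝ))/D := by
      rw [hc, hD]; field_simp; ring
    have e3 : ((j:ℝ)+1)/M = (j:ℝ)/M + ((i:ℝ) - (i':ℝ))/D := by
      have : (i:ℝ) - i' = -a := by linarith
      rw [this, hD]; field_simp
    have e4 : (j:ℝ)/M = (j:ℝ)/M + 0/D := by simp
    rw [e1, e2, Set.Ioo_inter_Ioo, Real.volume_Ioo]
    rw [min_comm i i', Nat.min_def, Nat.max_def, if_pos hii'.le, if_neg (not_le.mpr hii')]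
    by_cases hcase : i' ≤ k.val ∧ k.val < i
    · rw [if_pos hcase]
      obtain ⟨hk1, hk2⟩ := hcase
      have hk1' : (i' : ℝ) ≤ (k:ℝ) := by exact_mod_cast hk1
      have hk2' : ((k:ℝ)) + 1 ≤ i := by exact_mod_cast hk2
      have hsup : ((j:ℝ)/M) ⊔ ((j:ℝ)/M + ((i:ℝ) - (k:ℝ) - 1)/D) = (j:ℝ)/M + ((i:ℝ) - (k:ℝ) - 1)/D := by
        apply max_eq_right
        rw (occs := .pos [1]) [e4]
        exact key _ _ (by linarith)
      have hinf : (((j:ℝ)+1)/M) ⊓ ((j:ℝ)/M + ((i:ℝ) - (k:ℝ))/D) = (j:ℝ)/M + ((i:ℝ) - (k:ℝ))/D := by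
        apply min_eq_right
        rw [e3]
        exact key _ _ (by linarith)
      rw [hsup, hinf, abs_of_neg hneg]
      congr 1
      rw [hD]; field_simp; ring
    · rw [if_neg hcase]
      rw [ENNReal.ofReal_eq_zero]
      rcases not_and_or.mp hcase with hlt | hge
      · -- k < i', so k+1 ≤ i'
        have hk : (k:ℝ) + 1 ≤ i' := by
          have : k.val + 1 ≤ i' := not_le.mp hlt
          exact_mod_cast this
        have : (((j:ℝ)+1)/M) ⊓ ((j:ℝ)/M + ((i:ℝ) - (k:ℝ))/D) ≤ ((j:ℝ)+1)/M := min_le_left _ _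
        have h5 : ((j:ℝ)+1)/M ≤ (j:ℝ)/M + ((i:ℝ) - (k:ℝ) - 1)/D := by
          rw [e3]; exact key _ _ (by linarith)
        have h6 : (j:ℝ)/M + ((i:ℝ) - (k:ℝ) - 1)/D ≤ ((j:ℝ)/M) ⊔ ((j:ℝ)/M + ((i:ℝ) - (k:ℝ) - 1)/D) := le_max_right _ _
        linarith
      · -- k ≥ i
        have hk : (i:ℝ) ≤ (k:ℝ) := by
          have : i ≤ k.val := not_lt.mp hge
          exact_mod_cast this
        have h5 : (((j:ℝ)+1)/M) ⊓ ((j:ℝ)/M + ((i:ℝ) - (k:ℝ))/D) ≤ (j:ℝ)/M + ((i:ℝ) - (k:ℝ))/D := min_le_right _ _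
        have h6 : (j:ℝ)/M + ((i:ℝ) - (k:ℝ))/D ≤ (j:ℝ)/M := by
          rw (occs := .pos [2]) [e4]
          exact key _ _ (by linarith)
        have h7 : (j:ℝ)/M ≤ ((j:ℝ)/M) ⊔ ((j:ℝ)/M + ((i:ℝ) - (k:ℝ) - 1)/D) := le_max_left _ _
        linarith
  · -- a > 0
    have hii : (i : ℝ) < i' := by rw [haeq] at hpos; linarith
    have hii' : i < i' := Nat.cast_lt.mp hii
    set D : ℝ := a * M with hD
    have hDpos : 0 < D := by rw [hD]; positivity
    have hD0 : D ≠ 0 := hDpos.ne'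
    rw [if_pos hpos]
    have key : ∀ X Y : ℝ, X ≤ Y → (j:ℝ)/M + X/D ≤ (j:ℝ)/M + Y/D := by
      intro X Y h
      have h9 : X / D ≤ Y / D := by gcongr
      linarith
    have e1 : (((k:ℝ))/M - c)/a = (j:ℝ)/M + ((k:ℝ) - (i:ℝ))/D := by
      rw [hc, hD]; field_simp; ring
    have e2 : (((k:ℝ)+1)/M - c)/a = (j:ℝ)/M + ((k:ℝ) + 1 - (i:ℝ))/D := by
      rw [hc, hD]; field_simp; ring
    have e3 : ((j:ℝ)+1)/M = (j:ℝ)/M + ((i':ℝ) - (i:ℝ))/D := by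
      have : (i':ℝ) - i = a := by linarith
      rw [this, hD]; field_simp
    have e4 : (j:ℝ)/M = (j:ℝ)/M + 0/D := by simp
    rw [e1, e2, Set.Ioo_inter_Ioo, Real.volume_Ioo]
    rw [Nat.min_def, Nat.max_def, if_pos hii'.le, if_pos hii'.le]
    by_cases hcase : i ≤ k.val ∧ k.val < i'
    · rw [if_pos hcase]
      obtain ⟨hk1, hk2⟩ := hcase
      have hk1' : (i : ℝ) ≤ (k:ℝ) := by exact_mod_cast hk1
      have hk2' : ((k:ℝ)) + 1 ≤ i' := by exact_mod_cast hk2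
      have hsup : ((j:ℝ)/M) ⊔ ((j:ℝ)/M + ((k:ℝ) - (i:ℝ))/D) = (j:ℝ)/M + ((k:ℝ) - (i:ℝ))/D := by
        apply max_eq_right
        rw (occs := .pos [1]) [e4]
        exact key _ _ (by linarith)
      have hinf : (((j:ℝ)+1)/M) ⊓ ((j:ℝ)/M + ((k:ℝ) + 1 - (i:ℝ))/D) = (j:ℝ)/M + ((k:ℝ) + 1 - (i:ℝ))/D := by
        apply min_eq_right
        rw [e3]
        exact key _ _ (by linarith)
      rw [hsup, hinf, abs_of_pos hpos]
      congr 1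
      rw [hD]; field_simp; ring
    · rw [if_neg hcase]
      rw [ENNReal.ofReal_eq_zero]
      rcases not_and_or.mp hcase with hlt | hge
      · -- k < i
        have hk : (k:ℝ) + 1 ≤ i := by
          have : k.val + 1 ≤ i := not_le.mp hlt
          exact_mod_cast this
        have h5 : (((j:ℝ)+1)/M) ⊓ ((j:ℝ)/M + ((k:ℝ) + 1 - (i:ℝ))/D) ≤ (j:ℝ)/M + ((k:ℝ) + 1 - (i:ℝ))/D := min_le_right _ _
        have h6 : (j:ℝ)/M + ((k:ℝ) + 1 - (i:ℝ))/D ≤ (j:ℝ)/M := by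
          rw (occs := .pos [2]) [e4]
          exact key _ _ (by linarith)
        have h7 : (j:ℝ)/M ≤ ((j:ℝ)/M) ⊔ ((j:ℝ)/M + ((k:ℝ) - (i:ℝ))/D) := le_max_left _ _
        linarith
      · -- k ≥ i'
        have hk : (i':ℝ) ≤ (k:ℝ) := by
          have : i' ≤ k.val := not_lt.mp hge
          exact_mod_cast this
        have h5 : (((j:ℝ)+1)/M) ⊓ ((j:ℝ)/M + ((k:ℝ) + 1 - (i:ℝ))/D) ≤ ((j:ℝ)+1)/M := min_le_left _ _
        have h6 : ((j:ℝ)+1)/M ≤ (j:ℝ)/M + ((k:ℝ) - (i:ℝ))/D := by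
          rw [e3]; exact key _ _ (by linarith)
        have h7 : (j:ℝ)/M + ((k:ℝ) - (i:ℝ))/D ≤ ((j:ℝ)/M) ⊔ ((j:ℝ)/M + ((k:ℝ) - (i:ℝ))/D) := le_max_right _ _
        linarith

lemma atomE_subset_Icc (M : ℕ) (hM : 0 < M) (j : Fin M) : atomE M j ⊆ Set.Icc 0 1 := by
  intro x hx
  obtain ⟨h1, h2⟩ := hx
  have hMpos : (0:ℝ) < M := Nat.cast_pos.mpr hM
  constructor
  · have : (0:ℝ) ≤ (j:ℝ)/M := by positivity
    linarith
  · have hj1 : ((j:ℝ) + 1) ≤ M := by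
      have : (j:ℕ) + 1 ≤ M := j.2
      exact_mod_cast this
    have : ((j:ℝ) + 1)/M ≤ 1 := by
      rw [div_le_one hMpos]; exact hj1
    linarith

lemma icc_diff_union_atoms (M : ℕ) (hM : 0 < M) :
    Set.Icc (0:ℝ) 1 \ (⋃ j : Fin M, atomE M j) ⊆ Set.range (fun i : ℕ => (i:ℝ)/M) := by
  intro x hx
  obtain ⟨⟨hx0, hx1⟩, hnot⟩ := hx
  have hMpos : (0:ℝ) < M := Nat.cast_pos.mpr hM
  set y := x * M with hy
  have hy0 : 0 ≤ y := by positivity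
  have hyM : y ≤ M := by
    rw [hy]; nlinarith
  set i := Nat.floor y with hi
  have hfle : (i:ℝ) ≤ y := Nat.floor_le hy0
  by_cases hcase : (i:ℝ) = y
  · refine ⟨i, ?_⟩
    show (i:ℝ)/M = x
    rw [hcase, hy]; field_simp
  · exfalso
    have hflt : (i:ℝ) < y := lt_of_le_of_ne hfle hcase
    have hylt : y < (i:ℝ) + 1 := Nat.lt_floor_add_one y
    have hiM : i < M := by
      by_contra h
      have : (M:ℝ) ≤ i := by exact_mod_cast not_lt.mp h
      linarith
    apply hnot
    refine Set.mem_iUnion.mpr ⟨⟨i, hiM⟩, ?_⟩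
    constructor
    · show (i:ℝ)/M < x
      rw [div_lt_iff₀ hMpos]; exact hflt
    · show x < ((i:ℝ) + 1)/M
      rw [lt_div_iff₀ hMpos]; exact hylt

lemma col_sum (S : ℝ → ℝ) (hSmeas : Measurable S) (hpres : PreservesLeb S)
    (M : ℕ) (hM : 0 < M) (k : Fin M) :
    ∑ j : Fin M, volume (atomE M j ∩ S ⁻¹' atomE M k) = ENNReal.ofReal (1/M) := by
  have hmeasA : ∀ j : Fin M, MeasurableSet (atomE M j) := fun j => measurableSet_Ioo
  have hX : MeasurableSet (S ⁻¹' atomE M k) := hSmeas (hmeasA k)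
  have hdisj : Pairwise (Function.onFun Disjoint (fun j : Fin M => atomE M j ∩ S ⁻¹' atomE M k)) := by
    intro j j' hne
    apply Set.disjoint_of_subset inter_subset_left inter_subset_left
    rw [atomE, atomE, Set.Ioo_disjoint_Ioo]
    have hMpos : (0:ℝ) < M := Nat.cast_pos.mpr hM
    rcases hne.lt_or_gt with h | h
    · have h1 : (j:ℝ) + 1 ≤ (j':ℝ) := by exact_mod_cast h
      have h2 : ((j:ℝ)+1)/M ≤ (j':ℝ)/M := by gcongr
      exact le_trans (min_le_left _ _) (le_trans h2 (le_max_right _ _))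
    · have h1 : (j':ℝ) + 1 ≤ (j:ℝ) := by exact_mod_cast h
      have h2 : ((j':ℝ)+1)/M ≤ (j:ℝ)/M := by gcongr
      exact le_trans (min_le_right _ _) (le_trans h2 (le_max_left _ _))
  have hunion : ∑ j : Fin M, volume (atomE M j ∩ S ⁻¹' atomE M k)
      = volume (⋃ j : Fin M, (atomE M j ∩ S ⁻¹' atomE M k)) := by
    rw [measure_iUnion hdisj (fun j => (hmeasA j).inter hX)]
    exact (tsum_fintype _).symm
  rw [hunion]
  have hequ : (⋃ j : Fin M, (atomE M j ∩ S ⁻¹' atomE M k)) = (⋃ j : Fin M, atomE M j) ∩ S ⁻¹' atomE M k := by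
    rw [Set.iUnion_inter]
  rw [hequ]
  have hnull : volume (Set.Icc (0:ℝ) 1 \ (⋃ j : Fin M, atomE M j)) = 0 := by
    apply measure_mono_null (icc_diff_union_atoms M hM)
    exact (Set.countable_range _).measure_zero _
  have hvol : volume ((⋃ j : Fin M, atomE M j) ∩ S ⁻¹' atomE M k)
      = volume (Set.Icc (0:ℝ) 1 ∩ S ⁻¹' atomE M k) := by
    apply le_antisymm
    · apply measure_mono
      apply Set.inter_subset_inter_left
      exact Set.iUnion_subset (fun j => atomE_subset_Icc M hM j)
    · calc volume (Set.Icc (0:ℝ) 1 ∩ S ⁻¹' atomE M k)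
          ≤ volume (((⋃ j : Fin M, atomE M j) ∩ S ⁻¹' atomE M k) ∪
              (Set.Icc (0:ℝ) 1 \ (⋃ j : Fin M, atomE M j))) := by
            apply measure_mono
            intro x hx
            by_cases hmem : x ∈ ⋃ j : Fin M, atomE M j
            · exact Or.inl ⟨hmem, hx.2⟩
            · exact Or.inr ⟨hx.1, hmem⟩
        _ ≤ volume ((⋃ j : Fin M, atomE M j) ∩ S ⁻¹' atomE M k) +
              volume (Set.Icc (0:ℝ) 1 \ (⋃ j : Fin M, atomE M j)) := measure_union_le _ _
        _ = volume ((⋃ j : Fin M, atomE M j) ∩ S ⁻¹' atomE M k) := by rw [hnull, add_zero]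
  rw [hvol, hpres _ (atomE_subset_Icc M hM k) (hmeasA k)]
  rw [atomE, Real.volume_Ioo]
  congr 1
  have hMpos : (0:ℝ) < M := Nat.cast_pos.mpr hM
  field_simp
  ring

end MeasAux

/-- if `S` preserves Lebesgue measure, has an admissible sequence
of partitions, and all its slopes on the atoms of the `M₀`-equal partition have
the same absolute value `s`, then for every `n ≥ 1` the Markov matrix `B_n` is
unistochastic. -/
theorem stmt_9 (S : ℝ → ℝ) (hSmeas : Measurable S)
    (hSmaps : Set.MapsTo S (Set.Icc 0 1) (Set.Icc 0 1))
    (hpres : PreservesLeb S) (Mseq : ℕ → ℕ) (hadm : AdmissibleSeq S Mseq)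
    (s : ℝ) (a c : Fin (Mseq 0) → ℝ) (ha : ∀ j, a j ≠ 0)
    (hlin : ∀ j : Fin (Mseq 0), ∀ x ∈ atomE (Mseq 0) j, S x = a j * x + c j)
    (hep : ∀ j : Fin (Mseq 0), a j * ((j : ℝ) / (Mseq 0)) + c j ∈ endpts (Mseq 0) ∧
      a j * (((j : ℝ) + 1) / (Mseq 0)) + c j ∈ endpts (Mseq 0))
    (hslope : ∀ j, |a j| = s) :
    ∀ n : ℕ, 1 ≤ n → ∃ U : Matrix (Fin (Mseq n)) (Fin (Mseq n)) ℂ,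
      U ∈ Matrix.unitaryGroup (Fin (Mseq n)) ℂ ∧
      ∀ j k, ‖U j k‖ ^ 2 = markovB S (Mseq n) j k := by

  classical
  obtain ⟨hpos, hdvdseq, hadapt, _⟩ := hadm
  intro n _
  have hM : 0 < Mseq n := hpos n
  have hM0 : 0 < Mseq 0 := hpos 0
  have hdvd0' : ∀ m : ℕ, Mseq 0 ∣ Mseq m := by
    intro m
    induction m with
    | zero => exact dvd_rfl
    | succ m ih => exact ih.trans (hdvdseq m)
  have hdvd0 : Mseq 0 ∣ Mseq n := hdvd0' n
  obtain ⟨qq, hqq⟩ := hdvd0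
  have hqq0 : 0 < qq := by
    rcases Nat.eq_zero_or_pos qq with h | h
    · subst h; rw [Nat.mul_zero] at hqq; omega
    · exact h
  -- adapted data at level n
  choose a' c' ha' hlin' hepL hepR using hadapt n
  choose iL hiL hvalL using fun j => hepL j
  choose iR hiR hvalR using fun j => hepR j
  have hkey := fun j : Fin (Mseq n) =>
    atom_inter_vol S (Mseq n) hM j (a' j) (c' j) (ha' j) (hlin' j) (iL j) (iR j)
      (hvalL j) (hvalR j)
  -- slope transfer: |a' j| = s
  have hslopeM : ∀ j : Fin (Mseq n), |a' j| = s := by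
    intro j
    have hj0 : j.val / qq < Mseq 0 := by
      rw [Nat.div_lt_iff_lt_mul hqq0, ← hqq]
      exact j.2
    set j0 : Fin (Mseq 0) := ⟨j.val / qq, hj0⟩ with hj0def
    have hM0R : (0:ℝ) < Mseq 0 := Nat.cast_pos.mpr hM0
    have hMR : (0:ℝ) < Mseq n := Nat.cast_pos.mpr hM
    have hqqR : (0:ℝ) < qq := Nat.cast_pos.mpr hqq0
    have hMcast : (Mseq n : ℝ) = (Mseq 0 : ℝ) * qq := by exact_mod_cast hqq
    have hsub : atomE (Mseq n) j ⊆ atomE (Mseq 0) j0 := by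
      intro x hx
      obtain ⟨hx1, hx2⟩ := hx
      have hdm : qq * (j.val / qq) + j.val % qq = j.val := Nat.div_add_mod _ _
      have hmlt : j.val % qq < qq := Nat.mod_lt _ hqq0
      constructor
      · have h1 : ((j.val / qq : ℕ) : ℝ) * qq ≤ (j.val : ℝ) := by
          exact_mod_cast Nat.div_mul_le_self j.val qq
        have h2 : ((j0 : ℕ) : ℝ) / (Mseq 0) ≤ (j.val : ℝ) / (Mseq n) := by
          rw [hMcast, div_le_div_iff₀ hM0R (by positivity)]
          show ((j.val / qq : ℕ) : ℝ) * ((Mseq 0 : ℝ) * qq) ≤ (j.val:ℝ) * (Mseq 0)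
          calc ((j.val / qq : ℕ) : ℝ) * ((Mseq 0 : ℝ) * qq)
              = (((j.val / qq : ℕ) : ℝ) * qq) * (Mseq 0) := by ring
            _ ≤ (j.val:ℝ) * (Mseq 0) := by nlinarith
        calc ((j0 : ℕ) : ℝ) / (Mseq 0) ≤ (j.val : ℝ) / (Mseq n) := h2
          _ < x := hx1
      · have h1 : (j.val : ℝ) + 1 ≤ (((j.val / qq : ℕ) : ℝ) + 1) * qq := by
          have h3 : j.val + 1 ≤ (j.val / qq + 1) * qq := by
            have h4 : (j.val / qq + 1) * qq = qq * (j.val / qq) + qq := by ring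
            omega
          have := (Nat.cast_le (α := ℝ)).mpr h3
          push_cast at this ⊢
          linarith
        have h2 : (j.val : ℝ) / (Mseq n) + 1 / (Mseq n) ≤ ((j0 : ℕ) : ℝ) / (Mseq 0) + 1 / (Mseq 0) := by
          rw [← add_div, ← add_div, hMcast, div_le_div_iff₀ (by positivity) hM0R]
          show ((j.val:ℝ) + 1) * (Mseq 0) ≤ (((j.val / qq : ℕ) : ℝ) + 1) * ((Mseq 0:ℝ) * qq)
          calc ((j.val:ℝ) + 1) * (Mseq 0) ≤ ((((j.val / qq : ℕ) : ℝ) + 1) * qq) * (Mseq 0) := by nlinarith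
            _ = (((j.val / qq : ℕ) : ℝ) + 1) * ((Mseq 0:ℝ) * qq) := by ring
        have hxlt : x < (j.val : ℝ) / (Mseq n) + 1 / (Mseq n) := by
          rw [← add_div]; exact hx2
        calc x < (j.val : ℝ) / (Mseq n) + 1 / (Mseq n) := hxlt
          _ ≤ ((j0 : ℕ) : ℝ) / (Mseq 0) + 1 / (Mseq 0) := h2
          _ = (((j0 : ℕ) : ℝ) + 1) / (Mseq 0) := by rw [← add_div]
    -- two sample points
    have hxmem : ∀ r : ℝ, 0 < r → r < 1 → ((j.val : ℝ) + r) / (Mseq n) ∈ atomE (Mseq n) j := by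
      intro r hr0 hr1
      constructor
      · rw [div_lt_div_iff₀ hMR hMR]; nlinarith
      · rw [div_lt_div_iff₀ hMR hMR]; nlinarith
    have hx1m := hxmem (1/2) (by norm_num) (by norm_num)
    have hx2m := hxmem (1/4) (by norm_num) (by norm_num)
    have heq1 : a' j * (((j.val : ℝ) + 1/2) / (Mseq n)) + c' j
        = a j0 * (((j.val : ℝ) + 1/2) / (Mseq n)) + c j0 := by
      rw [← hlin' j _ hx1m, ← hlin j0 _ (hsub hx1m)]
    have heq2 : a' j * (((j.val : ℝ) + 1/4) / (Mseq n)) + c' j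
        = a j0 * (((j.val : ℝ) + 1/4) / (Mseq n)) + c j0 := by
      rw [← hlin' j _ hx2m, ← hlin j0 _ (hsub hx2m)]
    have hdiff : (a' j - a j0) * ((1/4) / (Mseq n)) = 0 := by
      linear_combination heq1 - heq2
    have haa : a' j = a j0 := by
      have hne : ((1:ℝ)/4) / (Mseq n) ≠ 0 := by positivity
      have := mul_eq_zero.mp hdiff
      rcases this with h | h
      · linarith [sub_eq_zero.mp h]
      · exact absurd h hne
    rw [haa]
    exact hslope j0
  -- positivity of s, natural slope
  have hs_pos : 0 < s := by
    have := hslopeM ⟨0, hM⟩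
    have := abs_pos.mpr (ha' ⟨0, hM⟩)
    linarith
  have hd : ∀ j : Fin (Mseq n), ((max (iL j) (iR j) - min (iL j) (iR j) : ℕ) : ℝ) = s := by
    intro j
    have h1 := (hkey j).1
    have h2 := hslopeM j
    rw [← h2, h1]
    rcases le_total (iL j) (iR j) with h | h
    · rw [max_eq_right h, min_eq_left h, Nat.cast_sub h]
      rw [abs_of_nonneg (by push_cast; have := (Nat.cast_le (α := ℝ)).mpr h; linarith)]
    · rw [max_eq_left h, min_eq_right h, Nat.cast_sub h]
      rw [abs_of_nonpos (by push_cast; have := (Nat.cast_le (α := ℝ)).mpr h; linarith)]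
      push_cast
      ring
  set snat : ℕ := max (iL ⟨0, hM⟩) (iR ⟨0, hM⟩) - min (iL ⟨0, hM⟩) (iR ⟨0, hM⟩) with hsnatdef
  have hs_cast : (snat : ℝ) = s := hd ⟨0, hM⟩
  have hsnat_pos : 0 < snat := by
    by_contra h
    push_neg at h
    interval_cases snat
    rw [Nat.cast_zero] at hs_cast
    linarith
  set p : Fin (Mseq n) → ℕ := fun j => min (iL j) (iR j) with hpdef
  have hmax : ∀ j, max (iL j) (iR j) = p j + snat := by
    intro j
    have h1 : ((max (iL j) (iR j) - min (iL j) (iR j) : ℕ) : ℝ) = (snat : ℝ) := by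
      rw [hd j, hs_cast]
    have h2 : max (iL j) (iR j) - min (iL j) (iR j) = snat := Nat.cast_injective h1
    have h3 : min (iL j) (iR j) ≤ max (iL j) (iR j) := min_le_max
    show max (iL j) (iR j) = min (iL j) (iR j) + snat
    omega
  have hp : ∀ j, p j + snat ≤ Mseq n := by
    intro j
    rw [← hmax j]
    exact max_le (hiL j) (hiR j)
  -- Markov matrix entries
  have hcondiff : ∀ (j : Fin (Mseq n)) (k : Fin (Mseq n)),
      (min (iL j) (iR j) ≤ k.val ∧ k.val < max (iL j) (iR j))
        ↔ (p j ≤ k.val ∧ k.val < p j + snat) := by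
    intro j k
    rw [hmax j]
  have habsa : ∀ j : Fin (Mseq n), |a' j| = (snat : ℝ) := by
    intro j; rw [hslopeM j, hs_cast]
  have hMR : (0:ℝ) < Mseq n := Nat.cast_pos.mpr hM
  have hsnatR : (0:ℝ) < snat := by exact_mod_cast hsnat_pos
  have hBval : ∀ j k, markovB S (Mseq n) j k
      = if p j ≤ k.val ∧ k.val < p j + snat then ((snat : ℝ))⁻¹ else 0 := by
    intro j k
    rw [markovB, (hkey j).2 k, habsa j]
    by_cases hcond : p j ≤ k.val ∧ k.val < p j + snat
    · rw [if_pos ((hcondiff j k).mpr hcond), if_pos hcond]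
      rw [ENNReal.toReal_ofReal (by positivity)]
      field_simp
    · rw [if_neg (fun h => hcond ((hcondiff j k).mp h)), if_neg hcond]
      simp
  -- column counts
  have hcount : ∀ k : Fin (Mseq n),
      ((Finset.univ.filter (fun j => p j ≤ k.val ∧ k.val < p j + snat)).card) = snat := by
    intro k
    have hsumvol := col_sum S hSmeas hpres (Mseq n) hM k
    have hrw : ∀ j : Fin (Mseq n), volume (atomE (Mseq n) j ∩ S ⁻¹' atomE (Mseq n) k)
        = if p j ≤ k.val ∧ k.val < p j + snat
            then ENNReal.ofReal (1/((snat:ℝ) * (Mseq n))) else 0 := by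
      intro j
      rw [(hkey j).2 k, habsa j]
      exact if_congr (hcondiff j k) rfl rfl
    rw [Finset.sum_congr rfl (fun j _ => hrw j)] at hsumvol
    rw [Finset.sum_ite, Finset.sum_const, Finset.sum_const_zero, add_zero] at hsumvol
    set cnt := (Finset.univ.filter (fun j : Fin (Mseq n) => p j ≤ k.val ∧ k.val < p j + snat)).card with hcnt
    have h1 : (cnt : ENNReal) * ENNReal.ofReal (1/((snat:ℝ) * (Mseq n))) = ENNReal.ofReal (1/(Mseq n : ℝ)) := by
      rw [← hsumvol, nsmul_eq_mul]
    have h2 : ENNReal.ofReal ((cnt : ℝ) * (1/((snat:ℝ) * (Mseq n)))) = ENNReal.ofReal (1/(Mseq n : ℝ)) := by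
      rw [ENNReal.ofReal_mul (Nat.cast_nonneg _), ENNReal.ofReal_natCast]
      exact h1
    have h3 : (cnt : ℝ) * (1/((snat:ℝ) * (Mseq n))) = 1/(Mseq n : ℝ) := by
      have := (ENNReal.ofReal_eq_ofReal_iff (mul_nonneg (Nat.cast_nonneg _) (le_of_lt (by positivity : (0:ℝ) < 1/((snat:ℝ) * (Mseq n))))) (le_of_lt (by positivity : (0:ℝ) < 1/(Mseq n : ℝ)))).mp h2
      exact this
    rw [mul_one_div, div_eq_div_iff (by positivity) hMR.ne'] at h3
    have h4 : (cnt:ℝ) = snat := by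
      apply mul_right_cancel₀ hMR.ne'
      linarith [h3]
    exact_mod_cast h4
  have hcov : ∀ k', k' < Mseq n →
      ((Finset.univ.filter (fun j => p j ≤ k' ∧ k' < p j + snat)).card) = snat := by
    intro k' hk'
    exact hcount ⟨k', hk'⟩
  have hN := Nlem (Mseq n) snat hsnat_pos p hp hcov
  exact unistochastic_of_flat (Mseq n) snat hM hsnat_pos (markovB S (Mseq n)) p hp hBval hN
end
end

section
/- Let M, T ≥ 1 be integers, let U be an M×M complex unitary matrix, let ψ_1, …, ψ_M be an orthonormal basis of ℂ^M consisting of eigenvectors of U, and let O be an arbitrary M×M complex matrix. Define the time average O_T = (1/T) ∑_{t=0}^{T-1} (U*)^t O U^t, where U* is the conjugate transpose of U. Then (1/M) ∑_{j=1}^M |⟨ψ_j, O ψ_j⟩|² ≤ (1/M) Tr(O_T* O_T). -/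
open MeasureTheory Set Filter Matrix

noncomputable section

lemma cs_aux {M : ℕ} (x w : Fin M → ℂ) (hx : dotProduct (star x) x = 1) :
    ‖dotProduct (star x) w‖ ^ 2 ≤ (dotProduct (star w) w).re := by
  set X : EuclideanSpace ℂ (Fin M) := (WithLp.equiv 2 _).symm x
  set W : EuclideanSpace ℂ (Fin M) := (WithLp.equiv 2 _).symm w
  have h1 : inner ℂ X W = dotProduct (star x) w :=
    (EuclideanSpace.inner_toLp_toLp x w).trans (dotProduct_comm _ _)
  have h2 : (inner ℂ X X : ℂ) = dotProduct (star x) x :=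
    (EuclideanSpace.inner_toLp_toLp x x).trans (dotProduct_comm _ _)
  have h3 : (inner ℂ W W : ℂ) = dotProduct (star w) w :=
    (EuclideanSpace.inner_toLp_toLp w w).trans (dotProduct_comm _ _)
  have hXn : ‖X‖ ^ 2 = 1 := by
    have := inner_self_eq_norm_sq (𝕜 := ℂ) X
    rw [h2, hx] at this; simpa using this.symm
  have hWn : ‖W‖ ^ 2 = (dotProduct (star w) w).re := by
    have := inner_self_eq_norm_sq (𝕜 := ℂ) W
    rw [h3] at this; exact this.symm ▸ rfl
  calc ‖dotProduct (star x) w‖ ^ 2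
      = ‖(inner ℂ X W : ℂ)‖ ^ 2 := by rw [h1]
    _ ≤ (‖X‖ * ‖W‖) ^ 2 := by
        exact pow_le_pow_left₀ (norm_nonneg _) (norm_inner_le_norm (𝕜 := ℂ) X W) 2
    _ = ‖X‖ ^ 2 * ‖W‖ ^ 2 := by ring
    _ = (dotProduct (star w) w).re := by rw [hXn, hWn, one_mul]

lemma diag_conj {M : ℕ} (ψ : Fin M → (Fin M → ℂ)) (C : Matrix (Fin M) (Fin M) ℂ) (j : Fin M) :
    ((Matrix.of fun i k => ψ k i)ᴴ * C * (Matrix.of fun i k => ψ k i)) j j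
      = dotProduct (star (ψ j)) (C.mulVec (ψ j)) := by
  simp only [Matrix.mul_apply, Matrix.conjTranspose_apply, Matrix.of_apply,
    dotProduct, Matrix.mulVec, Finset.sum_mul, Finset.mul_sum, Pi.star_apply]
  rw [Finset.sum_comm]
  exact Finset.sum_congr rfl fun k _ => Finset.sum_congr rfl fun i _ => by ring

lemma pow_mulVec' {M : ℕ} (U : Matrix (Fin M) (Fin M) ℂ) (v : Fin M → ℂ) (μ : ℂ)
    (h : U.mulVec v = μ • v) (t : ℕ) : (U ^ t).mulVec v = μ ^ t • v := by
  induction t with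
  | zero => simp
  | succ n ih =>
      rw [pow_succ, ← Matrix.mulVec_mulVec, h, Matrix.mulVec_smul, ih, smul_smul, pow_succ]
      ring_nf

lemma dotProduct_sum' {M : ℕ} (v : Fin M → ℂ) (s : Finset ℕ) (f : ℕ → (Fin M → ℂ)) :
    dotProduct v (∑ t ∈ s, f t) = ∑ t ∈ s, dotProduct v (f t) := by
  induction s using Finset.cons_induction with
  | empty => simp
  | cons a s ha ih => simp [Finset.sum_insert ha, dotProduct_add, ih]

lemma sum_mulVec' {M : ℕ} (s : Finset ℕ) (f : ℕ → Matrix (Fin M) (Fin M) ℂ) (v : Fin M → ℂ) :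
    (∑ t ∈ s, f t).mulVec v = ∑ t ∈ s, (f t).mulVec v := by
  induction s using Finset.cons_induction with
  | empty => simp
  | cons a s ha ih => simp [Finset.sum_insert ha, Matrix.add_mulVec, ih]


/-- for a unitary `U`, an orthonormal basis of eigenvectors `ψ_j`
of `U` and any matrix `O`, the quantum variance is majorized by the normalized
trace of `O_T* O_T`, where `O_T` is the time average of `O`. -/
theorem stmt_10 (M T : ℕ) (hM : 1 ≤ M) (hT : 1 ≤ T)
    (U O : Matrix (Fin M) (Fin M) ℂ) (hU : U ∈ Matrix.unitaryGroup (Fin M) ℂ)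
    (ψ : Fin M → (Fin M → ℂ))
    (hortho : ∀ j k : Fin M,
      dotProduct (star (ψ j)) (ψ k) = if j = k then 1 else 0)
    (heig : ∀ j : Fin M, ∃ μc : ℂ, U.mulVec (ψ j) = μc • ψ j) :
    (1 / (M : ℝ)) * ∑ j : Fin M,
        ‖dotProduct (star (ψ j)) (O.mulVec (ψ j))‖ ^ 2
      ≤ (1 / (M : ℝ)) *
        (Matrix.trace ((timeAvg M T U O)ᴴ * timeAvg M T U O)).re := by
  have hUU : Uᴴ * U = 1 := by
    have := hU.1
    rwa [Matrix.star_eq_conjTranspose] at this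
  set A := timeAvg M T U O with hA
  have hnorm : ∀ j, dotProduct (star (ψ j)) (ψ j) = 1 := by
    intro j; rw [hortho j j]; simp
  -- key: diagonal entries of A equal those of O in the eigenbasis
  have key : ∀ j, dotProduct (star (ψ j)) (A.mulVec (ψ j))
      = dotProduct (star (ψ j)) (O.mulVec (ψ j)) := by
    intro j
    obtain ⟨μ, hμ⟩ := heig j
    have hμ1 : star μ * μ = 1 := by
      have e1 : dotProduct (star (U.mulVec (ψ j))) (U.mulVec (ψ j)) = 1 := by
        rw [Matrix.star_mulVec, dotProduct_mulVec, Matrix.vecMul_vecMul, hUU,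
          Matrix.vecMul_one, hnorm j]
      rw [hμ] at e1
      have e2 : μ * star μ = 1 := by
        simpa [dotProduct_smul, smul_dotProduct, hnorm j, smul_smul] using e1
      rw [mul_comm] at e2; exact e2
    have hterm : ∀ t, dotProduct (star (ψ j)) (((Uᴴ)^t * O * U^t).mulVec (ψ j))
        = dotProduct (star (ψ j)) (O.mulVec (ψ j)) := by
      intro t
      have hpow : (U ^ t).mulVec (ψ j) = μ ^ t • ψ j := pow_mulVec' U (ψ j) μ hμ t
      have hct : (Uᴴ) ^ t = (U ^ t)ᴴ := (Matrix.conjTranspose_pow U t).symm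
      rw [← Matrix.mulVec_mulVec, ← Matrix.mulVec_mulVec, hpow, hct,
        Matrix.mulVec_smul]
      have : dotProduct (star (ψ j)) ((U ^ t)ᴴ.mulVec (μ ^ t • O.mulVec (ψ j)))
          = dotProduct (star ((U ^ t).mulVec (ψ j))) (μ ^ t • O.mulVec (ψ j)) := by
        rw [Matrix.star_mulVec, dotProduct_mulVec]
      rw [this, hpow]
      have hc : μ ^ t * star μ ^ t = 1 := by
        rw [← mul_pow, mul_comm μ (star μ), hμ1, one_pow]
      simp only [dotProduct_smul, smul_dotProduct, smul_smul, smul_eq_mul,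
        star_smul, star_pow]
      rw [← mul_assoc, hc, one_mul]
    have hTne : (T : ℂ) ≠ 0 := by
      exact_mod_cast Nat.cast_ne_zero.mpr (by omega)
    rw [hA]
    unfold timeAvg
    rw [Matrix.smul_mulVec, dotProduct_smul]
    have : (∑ t ∈ Finset.range T, (Uᴴ) ^ t * O * U ^ t).mulVec (ψ j)
        = ∑ t ∈ Finset.range T, ((Uᴴ) ^ t * O * U ^ t).mulVec (ψ j) :=
      sum_mulVec' _ _ _
    rw [this, dotProduct_sum']
    rw [Finset.sum_congr rfl fun t _ => hterm t]
    simp [smul_eq_mul, Finset.sum_const]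
    field_simp
  -- matrix P of eigenvectors
  set P : Matrix (Fin M) (Fin M) ℂ := Matrix.of fun i k => ψ k i with hPdef
  have hP : Pᴴ * P = 1 := by
    ext j k
    simp only [Matrix.mul_apply, Matrix.conjTranspose_apply, hPdef, Matrix.of_apply,
      Matrix.one_apply]
    have := hortho j k
    simpa [dotProduct] using this
  have hP' : P * Pᴴ = 1 := mul_eq_one_comm.mp hP
  have htr : Matrix.trace (Aᴴ * A) = ∑ j, dotProduct (star (A.mulVec (ψ j))) (A.mulVec (ψ j)) := by
    have e1 : Matrix.trace (Aᴴ * A) = Matrix.trace (Pᴴ * (Aᴴ * A) * P) := by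
      rw [Matrix.trace_mul_comm (Pᴴ * (Aᴴ * A)) P, ← Matrix.mul_assoc, hP', Matrix.one_mul]
    rw [e1, Matrix.trace]
    apply Finset.sum_congr rfl
    intro j _
    have := diag_conj ψ (Aᴴ * A) j
    rw [Matrix.diag_apply, this]
    rw [← Matrix.mulVec_mulVec, Matrix.star_mulVec, dotProduct_mulVec]
  rw [htr]
  have hre : (∑ j, dotProduct (star (A.mulVec (ψ j))) (A.mulVec (ψ j))).re
      = ∑ j, (dotProduct (star (A.mulVec (ψ j))) (A.mulVec (ψ j))).re := by
    exact Complex.re_sum _ _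
  rw [hre]
  apply mul_le_mul_of_nonneg_left _ (by positivity)
  apply Finset.sum_le_sum
  intro j _
  rw [← key j]
  exact cs_aux (ψ j) (A.mulVec (ψ j)) (hnorm j)
end
end

section
/- Let M, T ≥ 1, let U be an M×M complex unitary matrix and O an M×M complex diagonal matrix. For a sequence τ = (b_0, …, b_T) ∈ {1,…,M}^{T+1} define its amplitude A_τ = ∏_{t=0}^{T-1} U_{b_t b_{t+1}} and its average Φ_τ = (1/T) ∑_{t=1}^T O_{b_t b_t}. Assume that for every pair of indices (s, f) there is at most one sequence τ with b_0 = s, b_T = f and A_τ ≠ 0. Then Tr(O_T* O_T) = ∑_{τ ∈ {1,…,M}^{T+1}} |Φ_τ|² |A_τ|², where O_T = (1/T) ∑_{t=0}^{T-1} (U*)^t O U^t and U* is the conjugate transpose of U. -/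
open MeasureTheory Set Filter Matrix

noncomputable section

def mySnocEquiv (n : ℕ) (α : Type*) : ((Fin (n+1) → α) × α) ≃ (Fin (n+2) → α) where
  toFun p := Fin.snoc p.1 p.2
  invFun τ := (Fin.init τ, τ (Fin.last (n+1)))
  left_inv p := by simp
  right_inv τ := by simp

lemma pow_path {M : ℕ} (U : Matrix (Fin M) (Fin M) ℂ) (n : ℕ) (s f : Fin M) :
    (U ^ n) s f = ∑ τ : Fin (n+1) → Fin M,
      if τ 0 = s ∧ τ (Fin.last n) = f
      then ∏ t : Fin n, U (τ t.castSucc) (τ t.succ) else 0 := by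
  induction n generalizing f with
  | zero =>
    rw [pow_zero, Matrix.one_apply,
      Fintype.sum_equiv (Equiv.funUnique (Fin 1) (Fin M)) _
        (fun m => if m = s ∧ m = f then (1:ℂ) else 0) (fun τ => by simp [Fin.last])]
    simp [ite_and, Finset.sum_ite_eq']
  | succ n ih =>
    rw [pow_succ, Matrix.mul_apply]
    simp only [ih]
    rw [← Fintype.sum_equiv (mySnocEquiv n (Fin M))
        (fun p : (Fin (n+1) → Fin M) × Fin M =>
          if p.1 0 = s ∧ p.2 = f
          then (∏ t : Fin n, U (p.1 t.castSucc) (p.1 t.succ)) * U (p.1 (Fin.last n)) p.2 else 0)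
        _ ?_]
    · rw [Fintype.sum_prod_type]
      simp only [Finset.sum_mul]
      rw [Finset.sum_comm]
      refine Finset.sum_congr rfl fun x _ => ?_
      simp [ite_mul, ite_and, Finset.sum_ite_eq, Finset.sum_ite_eq']
    · rintro ⟨τ, m⟩
      simp only [mySnocEquiv, Equiv.coe_fn_mk]
      have h0 : (Fin.snoc τ m : Fin (n+2) → Fin M) 0 = τ 0 := by
        simp [Fin.snoc, Fin.castPred_zero]
      simp only [h0, Fin.snoc_last]
      rw [Fin.prod_univ_castSucc]
      simp [Fin.snoc_castSucc, Fin.snoc_last, Fin.succ_castSucc, Fin.succ_last, - Fin.castSucc_succ]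

lemma sandwich_path {M : ℕ} (U : Matrix (Fin M) (Fin M) ℂ) (d : Fin M → ℂ)
    (a b : ℕ) (s f : Fin M) :
    (U ^ a * Matrix.diagonal d * U ^ b) s f
      = ∑ τ : Fin (a + b + 1) → Fin M,
        if τ 0 = s ∧ τ (Fin.last (a + b)) = f
        then d (τ ⟨a, by omega⟩) * ∏ t : Fin (a + b), U (τ t.castSucc) (τ t.succ) else 0 := by
  induction b generalizing f with
  | zero =>
    show (U ^ a * Matrix.diagonal d * U ^ 0) s f
      = ∑ τ : Fin (a + 1) → Fin M,
        if τ 0 = s ∧ τ (Fin.last a) = f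
        then d (τ (Fin.last a)) * ∏ t : Fin a, U (τ t.castSucc) (τ t.succ) else 0
    rw [pow_zero, mul_one, Matrix.mul_diagonal, pow_path, Finset.sum_mul]
    refine Finset.sum_congr rfl fun τ _ => ?_
    rw [ite_mul, zero_mul]
    by_cases h : τ 0 = s ∧ τ (Fin.last a) = f
    · rw [if_pos h, if_pos h, mul_comm, h.2]
    · rw [if_neg h, if_neg h]
  | succ b ih =>
    rw [show U ^ a * Matrix.diagonal d * U ^ (b+1)
        = (U ^ a * Matrix.diagonal d * U ^ b) * U by rw [pow_succ, ← mul_assoc], Matrix.mul_apply]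
    simp only [ih]
    refine Eq.trans ?_ (Fintype.sum_equiv (mySnocEquiv (a + b) (Fin M))
        (fun p : (Fin (a + b + 1) → Fin M) × Fin M =>
          if p.1 0 = s ∧ p.2 = f
          then (d (p.1 ⟨a, by omega⟩) * ∏ t : Fin (a + b), U (p.1 t.castSucc) (p.1 t.succ))
              * U (p.1 (Fin.last (a + b))) p.2 else 0)
        (fun τ : Fin (a + b + 2) → Fin M =>
          if τ 0 = s ∧ τ (Fin.last (a + b + 1)) = f
          then d (τ ⟨a, by omega⟩) * ∏ t : Fin (a + b + 1), U (τ t.castSucc) (τ t.succ) else 0)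
        ?_)
    · rw [Fintype.sum_prod_type]
      simp only [Finset.sum_mul]
      rw [Finset.sum_comm]
      refine Finset.sum_congr rfl fun x _ => ?_
      simp only [ite_mul, zero_mul, ite_and, Finset.sum_ite_eq, Finset.sum_ite_eq',
        Finset.mem_univ, if_true]
      by_cases h : x 0 = s
      · simp [h, mul_assoc]
      · simp [h]
    · rintro ⟨τ, m⟩
      simp only [mySnocEquiv, Equiv.coe_fn_mk]
      have h0 : (Fin.snoc τ m : Fin (a + b + 2) → Fin M) 0 = τ 0 := by
        simp [Fin.snoc, Fin.castPred_zero]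
      have ha : (Fin.snoc τ m : Fin (a + b + 2) → Fin M) ⟨a, by omega⟩ = τ ⟨a, by omega⟩ := by
        rw [show (⟨a, by omega⟩ : Fin (a + b + 2)) = Fin.castSucc ⟨a, by omega⟩ from rfl,
          Fin.snoc_castSucc]
      simp only [h0, Fin.snoc_last, ha]
      rw [Fin.prod_univ_castSucc]
      simp [Fin.snoc_castSucc, Fin.snoc_last, Fin.succ_castSucc, Fin.succ_last, mul_assoc, - Fin.castSucc_succ]

lemma sandwich_path'' {M : ℕ} (U : Matrix (Fin M) (Fin M) ℂ) (d : Fin M → ℂ)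
    {n a b : ℕ} (hab : a + b = n) (s f : Fin M) :
    (U ^ a * Matrix.diagonal d * U ^ b) s f
      = ∑ τ : Fin (n + 1) → Fin M,
        if τ 0 = s ∧ τ (Fin.last n) = f
        then d (τ ⟨a, by omega⟩) * ∏ t : Fin n, U (τ t.castSucc) (τ t.succ) else 0 := by
  subst hab; exact sandwich_path U d a b s f

lemma normSq_sum_unique {ι : Type*} [Fintype ι] (c : ι → ℂ)
    (h : ∀ i j, c i ≠ 0 → c j ≠ 0 → i = j) :
    Complex.normSq (∑ i, c i) = ∑ i, Complex.normSq (c i) := by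
  by_cases hz : ∀ i, c i = 0
  · simp [hz]
  · push_neg at hz
    obtain ⟨i0, hi0⟩ := hz
    have hoth : ∀ j, j ≠ i0 → c j = 0 := fun j hj => by
      by_contra hc; exact hj (h j i0 hc hi0)
    rw [Finset.sum_eq_single i0 (fun j _ hj => hoth j hj)
        (fun h => absurd (Finset.mem_univ i0) h),
      Finset.sum_eq_single i0 (fun j _ hj => by rw [hoth j hj]; simp)
        (fun h => absurd (Finset.mem_univ i0) h)]


/-- if for every pair of endpoints there is at most one trajectory
with nonzero amplitude, then the trace of `O_T* O_T` is given exactly by the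
diagonal sum `∑_τ |Φ_τ|² |A_τ|²`. -/
theorem stmt_12 (M T : ℕ) (hM : 1 ≤ M) (hT : 1 ≤ T)
    (U : Matrix (Fin M) (Fin M) ℂ) (hU : U ∈ Matrix.unitaryGroup (Fin M) ℂ)
    (d : Fin M → ℂ)
    (huniq : ∀ τ₁ τ₂ : Fin (T + 1) → Fin M,
      τ₁ 0 = τ₂ 0 → τ₁ (Fin.last T) = τ₂ (Fin.last T) →
      (∏ t : Fin T, U (τ₁ t.castSucc) (τ₁ t.succ)) ≠ 0 →
      (∏ t : Fin T, U (τ₂ t.castSucc) (τ₂ t.succ)) ≠ 0 → τ₁ = τ₂) :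
    Matrix.trace ((timeAvg M T U (Matrix.diagonal d))ᴴ *
        timeAvg M T U (Matrix.diagonal d))
      = ((∑ τ : Fin (T + 1) → Fin M,
          ‖(1 / (T : ℂ)) * ∑ t : Fin T, d (τ t.succ)‖ ^ 2 *
            ‖∏ t : Fin T, U (τ t.castSucc) (τ t.succ)‖ ^ 2 : ℝ) : ℂ) := by
  classical
  have hUs : Uᴴ * U = 1 := by
    simpa [Matrix.star_eq_conjTranspose] using Matrix.mem_unitaryGroup_iff'.mp hU
  have hUU : U * Uᴴ = 1 := by
    simpa [Matrix.star_eq_conjTranspose] using Matrix.mem_unitaryGroup_iff.mp hU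
  have L1 : ∀ n : ℕ, U ^ n * (Uᴴ) ^ n = 1 := by
    intro n
    induction n with
    | zero => simp
    | succ n ih =>
      rw [pow_succ' U, pow_succ (Uᴴ), mul_assoc, ← mul_assoc (U ^ n), ih, one_mul, hUU]
  have L2 : ∀ n : ℕ, (Uᴴ) ^ n * U ^ n = 1 := by
    intro n
    induction n with
    | zero => simp
    | succ n ih =>
      rw [pow_succ (Uᴴ), pow_succ' U, mul_assoc, ← mul_assoc (Uᴴ), hUs, one_mul, ih]
  set D := Matrix.diagonal d with hD
  set A : Matrix (Fin M) (Fin M) ℂ := timeAvg M T U D with hA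
  set B : Matrix (Fin M) (Fin M) ℂ := U ^ T * A with hB
  have hBA : Bᴴ * B = Aᴴ * A := by
    rw [hB, Matrix.conjTranspose_mul, Matrix.conjTranspose_pow, mul_assoc,
      ← mul_assoc ((Uᴴ) ^ T), L2 T, one_mul]
  -- entries of B
  have hΦ : ∀ τ : Fin (T+1) → Fin M,
      ∑ t ∈ Finset.range T, d (τ ⟨T - t, Nat.lt_succ_of_le (Nat.sub_le T t)⟩)
        = ∑ u : Fin T, d (τ u.succ) := by
    intro τ
    rw [← Fin.sum_univ_eq_sum_range]
    exact (Fintype.sum_equiv Fin.revPerm _ _ (fun x => by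
      have hx := x.isLt
      congr 1
      exact congrArg τ (Fin.ext (by simp [Fin.rev]; omega)))).symm
  have hBsum : B = (T:ℂ)⁻¹ • ∑ t ∈ Finset.range T, U ^ (T - t) * D * U ^ t := by
    rw [hB, hA, timeAvg, Matrix.mul_smul, Finset.mul_sum]
    congr 1
    refine Finset.sum_congr rfl fun t ht => ?_
    have htT : t ≤ T := le_of_lt (Finset.mem_range.mp ht)
    rw [show U ^ T = U ^ (T - t) * U ^ t by rw [← pow_add, Nat.sub_add_cancel htT],
      mul_assoc (U ^ (T - t)),
      show U ^ t * ((Uᴴ) ^ t * D * U ^ t) = (U ^ t * (Uᴴ) ^ t) * (D * U ^ t) by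
        rw [mul_assoc, mul_assoc],
      L1 t, one_mul, ← mul_assoc]
  have hBentry : ∀ s f : Fin M, B s f = ∑ τ : Fin (T+1) → Fin M,
      if τ 0 = s ∧ τ (Fin.last T) = f
      then ((T:ℂ)⁻¹ * ∑ t : Fin T, d (τ t.succ))
          * ∏ t : Fin T, U (τ t.castSucc) (τ t.succ) else 0 := by
    intro s f
    have hterm : ∀ t ∈ Finset.range T, (U ^ (T - t) * D * U ^ t) s f
        = ∑ τ : Fin (T+1) → Fin M,
          if τ 0 = s ∧ τ (Fin.last T) = f
          then d (τ ⟨T - t, Nat.lt_succ_of_le (Nat.sub_le T t)⟩)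
              * ∏ t : Fin T, U (τ t.castSucc) (τ t.succ) else 0 := fun t ht =>
      sandwich_path'' U d (Nat.sub_add_cancel (le_of_lt (Finset.mem_range.mp ht))) s f
    rw [hBsum, Matrix.smul_apply, Matrix.sum_apply, smul_eq_mul,
      Finset.sum_congr rfl hterm, Finset.sum_comm, Finset.mul_sum]
    refine Finset.sum_congr rfl fun τ _ => ?_
    by_cases hep : τ 0 = s ∧ τ (Fin.last T) = f
    · simp only [if_pos hep]
      rw [← Finset.sum_mul, ← mul_assoc]
      congr 2
      rw [← hΦ τ]
    · simp only [if_neg hep, Finset.sum_const_zero, mul_zero]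
  -- normSq of entries
  have key : ∀ s f : Fin M, Complex.normSq (B s f)
      = ∑ τ : Fin (T+1) → Fin M,
        if τ 0 = s ∧ τ (Fin.last T) = f
        then Complex.normSq ((T:ℂ)⁻¹ * ∑ t : Fin T, d (τ t.succ))
            * Complex.normSq (∏ t : Fin T, U (τ t.castSucc) (τ t.succ)) else 0 := by
    intro s f
    rw [hBentry s f, normSq_sum_unique _ ?_]
    · refine Finset.sum_congr rfl fun τ _ => ?_
      by_cases hep : τ 0 = s ∧ τ (Fin.last T) = f
      · rw [if_pos hep, if_pos hep, Complex.normSq_mul]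
      · rw [if_neg hep, if_neg hep]; simp
    · intro τ₁ τ₂ h1 h2
      rw [ne_eq, ite_eq_right_iff, not_forall] at h1 h2
      obtain ⟨hep1, hne1⟩ := h1
      obtain ⟨hep2, hne2⟩ := h2
      exact huniq τ₁ τ₂ (hep1.1.trans hep2.1.symm) (hep1.2.trans hep2.2.symm)
        (right_ne_zero_of_mul hne1) (right_ne_zero_of_mul hne2)
  -- assemble
  have htr : Matrix.trace (Aᴴ * A)
      = ((∑ f : Fin M, ∑ s : Fin M, Complex.normSq (B s f) : ℝ) : ℂ) := by
    rw [← hBA]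
    simp only [Matrix.trace, Matrix.diag, Matrix.mul_apply, Matrix.conjTranspose_apply]
    push_cast
    refine Finset.sum_congr rfl fun f _ => Finset.sum_congr rfl fun s _ => ?_
    rw [Complex.star_def, mul_comm, Complex.mul_conj]
  rw [htr]
  norm_cast
  rw [Finset.sum_congr rfl fun f _ => Finset.sum_congr rfl fun s _ => key s f]
  rw [Finset.sum_congr rfl fun f (_ : f ∈ Finset.univ) => Finset.sum_comm, Finset.sum_comm]
  refine Finset.sum_congr rfl fun τ _ => ?_
  rw [Complex.sq_norm, Complex.sq_norm, one_div]
  simp [ite_and, Finset.sum_ite_eq]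
end
end
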